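/- arXiv:1606.08749 — 8 statements merged into one kernel-verified Lean document; each statement's English description precedes it below -/
import Mathlib

section
/- Let X be a Banach space and let Ω₁, Ω₂ be nonempty closed subsets of X such that ℝ⁺(Ω₁ − Ω₂) = X. Then for any numbers α, β ≥ 0 the set K_{α,β} := {(x*₁, x*₂) ∈ X* × X* : σ_{Ω₁}(x*₁) + σ_{Ω₂}(x*₂) ≤ α and ‖x*₁ + x*₂‖ ≤ β} is compact in the weak* topology of X* × X*. -/
open Pointwise

/-!
The set `K_{α,β}` is cut out by the weak*-closed conditions `x₁*(x) + x₂*(y) ≤ α`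
(`x ∈ Ω₁`, `y ∈ Ω₂`) and `‖x₁* + x₂*‖ ≤ β`, so by Banach–Alaoglu it suffices to bound `‖x₁*‖`
on it. For `x ∈ Ω₁`, `y ∈ Ω₂` these conditions give `x₁*(x - y) ≤ α + β‖y‖`, so by
`ℝ⁺(Ω₁ - Ω₂) = X` every `x₁*(z)` is bounded above on `K_{α,β}`, and applying this to `±z`
makes the family pointwise bounded; Banach–Steinhaus then bounds `‖x₁*‖` uniformly.
-/

/-- Support function of a set, as an extended-real-valued function on the weak* dual. -/
noncomputable def suppW {X : Type*} [NormedAddCommGroup X] [NormedSpace ℝ X]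
    (Ω : Set X) (p : WeakDual ℝ X) : EReal :=
  ⨆ x ∈ Ω, (p x : EReal)

/-- `ℝ⁺(Ω) = {t • v : t > 0, v ∈ Ω}`. -/
def posSpan {X : Type*} [SMul ℝ X] (Ω : Set X) : Set X :=
  {x | ∃ t : ℝ, 0 < t ∧ ∃ v ∈ Ω, x = t • v}

open WeakDual Metric

section

variable {X : Type*} [NormedAddCommGroup X] [NormedSpace ℝ X]

lemma suppW_add_suppW_le_coe_iff (Ω₁ Ω₂ : Set X) (p₁ p₂ : WeakDual ℝ X) (α : ℝ) :
    suppW Ω₁ p₁ + suppW Ω₂ p₂ ≤ (α : EReal) ↔ ∀ x ∈ Ω₁, ∀ y ∈ Ω₂, p₁ x + p₂ y ≤ α := by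
  constructor
  · intro h x hx y hy
    have := (add_le_add (le_biSup _ hx) (le_biSup _ hy)).trans h
    exact_mod_cast this
  · intro h
    refine EReal.add_le_of_forall_lt fun a ha b hb => ?_
    obtain ⟨x, hx, hax⟩ := lt_biSup_iff.1 ha
    obtain ⟨y, hy, hby⟩ := lt_biSup_iff.1 hb
    calc a + b ≤ (p₁ x : EReal) + p₂ y := add_le_add hax.le hby.le
      _ ≤ α := by exact_mod_cast h x hx y hy

def supportLevelSet (Ω₁ Ω₂ : Set X) (α β : ℝ) : Set (WeakDual ℝ X × WeakDual ℝ X) :=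
  {p | suppW Ω₁ p.1 + suppW Ω₂ p.2 ≤ (α : EReal) ∧ ‖toStrongDual p.1 + toStrongDual p.2‖ ≤ β}

lemma supportLevelSet_eq (Ω₁ Ω₂ : Set X) (α β : ℝ) :
    supportLevelSet Ω₁ Ω₂ α β =
      (⋂ x ∈ Ω₁, ⋂ y ∈ Ω₂, {p : WeakDual ℝ X × WeakDual ℝ X | p.1 x + p.2 y ≤ α}) ∩
        (fun p : WeakDual ℝ X × WeakDual ℝ X => p.1 + p.2) ⁻¹'
          (toStrongDual ⁻¹' closedBall 0 β) := by
  ext p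
  simp only [supportLevelSet, Set.mem_inter_iff, Set.mem_iInter,
    Set.mem_preimage, mem_closedBall_zero_iff, suppW_add_suppW_le_coe_iff]
  rfl

lemma isClosed_supportLevelSet (Ω₁ Ω₂ : Set X) (α β : ℝ) :
    IsClosed (supportLevelSet Ω₁ Ω₂ α β) := by
  rw [supportLevelSet_eq]
  refine .inter (isClosed_biInter fun x _ => isClosed_biInter fun y _ => ?_) ?_
  · exact isClosed_le (((eval_continuous x).comp continuous_fst).add
      ((eval_continuous y).comp continuous_snd)) continuous_const
  · exact (isClosed_closedBall 0 β).preimage (continuous_fst.add continuous_snd)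

lemma fst_apply_sub_le_of_mem_supportLevelSet {Ω₁ Ω₂ : Set X} {α β : ℝ}
    {p : WeakDual ℝ X × WeakDual ℝ X} (hp : p ∈ supportLevelSet Ω₁ Ω₂ α β)
    {x y : X} (hx : x ∈ Ω₁) (hy : y ∈ Ω₂) :
    p.1 (x - y) ≤ α + β * ‖y‖ := by
  have hxy : p.1 x + p.2 y ≤ α := (suppW_add_suppW_le_coe_iff _ _ _ _ _).1 hp.1 x hx y hy
  have hyy : |p.1 y + p.2 y| ≤ β * ‖y‖ := by
    simpa using ContinuousLinearMap.le_of_opNorm_le _ hp.2 y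
  linarith [neg_abs_le (p.1 y + p.2 y), map_sub p.1 x y]

lemma bddAbove_fst_apply_supportLevelSet {Ω₁ Ω₂ : Set X} (α β : ℝ) {z : X}
    (hz : z ∈ posSpan (Ω₁ - Ω₂)) :
    BddAbove ((fun p : WeakDual ℝ X × WeakDual ℝ X => p.1 z) '' supportLevelSet Ω₁ Ω₂ α β) := by
  obtain ⟨t, ht, _, ⟨x, hx, y, hy, rfl⟩, rfl⟩ := hz
  refine ⟨t * (α + β * ‖y‖), ?_⟩
  rintro _ ⟨p, hp, rfl⟩
  change p.1 (t • (x - y)) ≤ _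
  rw [map_smul, smul_eq_mul]
  exact mul_le_mul_of_nonneg_left (fst_apply_sub_le_of_mem_supportLevelSet hp hx hy) ht.le

lemma exists_norm_le_of_forall_bddAbove [CompleteSpace X] {ι : Type*}
    (f : ι → StrongDual ℝ X) (h : ∀ z, BddAbove (Set.range fun i => f i z)) :
    ∃ C, ∀ i, ‖f i‖ ≤ C := by
  refine banach_steinhaus fun z => ?_
  obtain ⟨a, ha⟩ := h z
  obtain ⟨b, hb⟩ := h (-z)
  refine ⟨max a b, fun i => abs_le.2 ⟨?_, (ha ⟨i, rfl⟩).trans (le_max_left a b)⟩⟩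
  have : -f i z ≤ b := by simpa using hb ⟨i, rfl⟩
  linarith [le_max_right a b]

lemma supportLevelSet_subset_closedBall_prod {Ω₁ Ω₂ : Set X} {α β C : ℝ}
    (hC : ∀ p ∈ supportLevelSet Ω₁ Ω₂ α β, ‖toStrongDual p.1‖ ≤ C) :
    supportLevelSet Ω₁ Ω₂ α β ⊆
      (toStrongDual ⁻¹' closedBall 0 C) ×ˢ (toStrongDual ⁻¹' closedBall 0 (β + C)) := by
  intro p hp
  simp only [Set.mem_prod, Set.mem_preimage, mem_closedBall_zero_iff]
  refine ⟨hC p hp, ?_⟩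
  calc ‖toStrongDual p.2‖ = ‖(toStrongDual p.1 + toStrongDual p.2) - toStrongDual p.1‖ := by
        rw [add_sub_cancel_left]
    _ ≤ ‖toStrongDual p.1 + toStrongDual p.2‖ + ‖toStrongDual p.1‖ := norm_sub_le _ _
    _ ≤ β + C := add_le_add hp.2 (hC p hp)

end

theorem weakStar_compact_support_level_sets_general
    {X : Type*} [NormedAddCommGroup X] [NormedSpace ℝ X] [CompleteSpace X]
    (Ω₁ Ω₂ : Set X)
    (hspan : posSpan (Ω₁ - Ω₂) = Set.univ)
    (α β : ℝ) :
    IsCompact {p : WeakDual ℝ X × WeakDual ℝ X |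
      suppW Ω₁ p.1 + suppW Ω₂ p.2 ≤ (α : EReal) ∧
      ‖WeakDual.toStrongDual p.1 + WeakDual.toStrongDual p.2‖ ≤ β} := by
  change IsCompact (supportLevelSet Ω₁ Ω₂ α β)
  obtain ⟨C, hC⟩ := exists_norm_le_of_forall_bddAbove
    (fun p : supportLevelSet Ω₁ Ω₂ α β => toStrongDual p.1.1) fun z => by
      have := bddAbove_fst_apply_supportLevelSet α β (hspan ▸ Set.mem_univ z)
      rwa [Set.image_eq_range] at this
  have hball := (WeakDual.isCompact_closedBall (0 : StrongDual ℝ X) C).prod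
    (WeakDual.isCompact_closedBall (0 : StrongDual ℝ X) (β + C))
  exact hball.of_isClosed_subset (isClosed_supportLevelSet Ω₁ Ω₂ α β)
    (supportLevelSet_subset_closedBall_prod fun p hp => hC ⟨p, hp⟩)

/-- weak* compactness of the restricted level sets
`K_{α,β} = {(x₁*,x₂*) : σ_{Ω₁}(x₁*) + σ_{Ω₂}(x₂*) ≤ α, ‖x₁* + x₂*‖ ≤ β}` in a Banach
space `X` with nonempty closed `Ω₁, Ω₂` satisfying `ℝ⁺(Ω₁ - Ω₂) = X`. -/
theorem weakStar_compact_support_level_sets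
    {X : Type*} [NormedAddCommGroup X] [NormedSpace ℝ X] [CompleteSpace X]
    (Ω₁ Ω₂ : Set X) (h1 : Ω₁.Nonempty) (h2 : Ω₂.Nonempty)
    (hc1 : IsClosed Ω₁) (hc2 : IsClosed Ω₂)
    (hspan : posSpan (Ω₁ - Ω₂) = Set.univ)
    (α β : ℝ) (hα : 0 ≤ α) (hβ : 0 ≤ β) :
    IsCompact {p : WeakDual ℝ X × WeakDual ℝ X |
      suppW Ω₁ p.1 + suppW Ω₂ p.2 ≤ (α : EReal) ∧
      ‖WeakDual.toStrongDual p.1 + WeakDual.toStrongDual p.2‖ ≤ β} :=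
  weakStar_compact_support_level_sets_general Ω₁ Ω₂ hspan α β
end

section
/- Let X be a separated locally convex topological vector space over the reals and let Ω₁, Ω₂ ⊂ X be nonempty convex sets. Then: (a) Ω₁ and Ω₂ form an extremal system in X if and only if 0 ∉ int(Ω₁ − Ω₂); (b) if Ω₁ and Ω₂ form an extremal system, then (int Ω₁) ∩ Ω₂ = ∅ and (int Ω₂) ∩ Ω₁ = ∅. -/
/-! Extremality of `Ω₁, Ω₂` only says that `Ω₂ - Ω₁`, the set of translations making the two sets
meet, is not a neighbourhood of `0`. Negation turns this into the same statement for `Ω₁ - Ω₂`,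
and an interior point of `Ω₁` lying in `Ω₂` (or vice versa) would put `0` in `interior (Ω₁ - Ω₂)`. -/

open Pointwise

/-- Two nonempty sets `Ω₁, Ω₂` form an extremal system: for every neighborhood `V` of the
origin there is `a ∈ V` with `(Ω₁ + a) ∩ Ω₂ = ∅`. -/
def ExtremalSystem {X : Type*} [AddCommGroup X] [TopologicalSpace X]
    (Ω₁ Ω₂ : Set X) : Prop :=
  ∀ V ∈ nhds (0 : X), ∃ a ∈ V, ((fun w => w + a) '' Ω₁) ∩ Ω₂ = ∅

open Set Topology

section

variable {G : Type*} [AddCommGroup G]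

theorem image_add_right_inter_eq_empty_iff (s t : Set G) (a : G) :
    (fun w => w + a) '' s ∩ t = ∅ ↔ a ∉ t - s := by
  rw [eq_empty_iff_forall_notMem]
  constructor
  · rintro h ⟨y, hy, x, hx, rfl⟩
    exact h y ⟨⟨x, hx, add_sub_cancel x y⟩, hy⟩
  · rintro h _ ⟨⟨x, hx, rfl⟩, hxa⟩
    exact h ⟨x + a, hxa, x, hx, add_sub_cancel_left x a⟩

variable [TopologicalSpace G]

theorem extremalSystem_iff_sub_notMem_nhds (s t : Set G) :
    ExtremalSystem s t ↔ t - s ∉ 𝓝 0 := by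
  constructor
  · intro h hts
    obtain ⟨a, ha, hempty⟩ := h _ hts
    exact (image_add_right_inter_eq_empty_iff s t a).1 hempty ha
  · intro h V hV
    obtain ⟨a, haV, ha⟩ := not_subset.1 fun hVts => h (Filter.mem_of_superset hV hVts)
    exact ⟨a, haV, (image_add_right_inter_eq_empty_iff s t a).2 ha⟩

variable [IsTopologicalAddGroup G]

theorem sub_mem_nhds_zero_comm {s t : Set G} : s - t ∈ 𝓝 0 ↔ t - s ∈ 𝓝 0 :=
  have swap : ∀ {u v : Set G}, u - v ∈ 𝓝 0 → v - u ∈ 𝓝 0 := fun h => by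
    simpa only [neg_sub] using neg_mem_nhds_zero G h
  ⟨swap, swap⟩

theorem extremalSystem_iff_zero_notMem_interior_sub (s t : Set G) :
    ExtremalSystem s t ↔ (0 : G) ∉ interior (s - t) := by
  rw [extremalSystem_iff_sub_notMem_nhds, mem_interior_iff_mem_nhds, sub_mem_nhds_zero_comm]

theorem interior_inter_eq_empty_of_zero_notMem_interior_sub {s t : Set G}
    (h : (0 : G) ∉ interior (s - t)) : interior s ∩ t = ∅ :=
  eq_empty_iff_forall_notMem.2 fun x ⟨hxs, hxt⟩ =>
    h (subset_interior_sub_left ⟨x, hxs, x, hxt, sub_self x⟩)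

theorem inter_interior_eq_empty_of_zero_notMem_interior_sub {s t : Set G}
    (h : (0 : G) ∉ interior (s - t)) : s ∩ interior t = ∅ :=
  eq_empty_iff_forall_notMem.2 fun x ⟨hxs, hxt⟩ =>
    h (subset_interior_sub_right ⟨x, hxs, x, hxt, sub_self x⟩)

end

theorem extremalSystem_iff_and_interior_disjoint_general
    {X : Type*} [AddCommGroup X] [TopologicalSpace X]
    [IsTopologicalAddGroup X]
    (Ω₁ Ω₂ : Set X) :
    (ExtremalSystem Ω₁ Ω₂ ↔ (0 : X) ∉ interior (Ω₁ - Ω₂)) ∧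
    (ExtremalSystem Ω₁ Ω₂ → (interior Ω₁) ∩ Ω₂ = ∅ ∧ (interior Ω₂) ∩ Ω₁ = ∅) := by
  have hiff := extremalSystem_iff_zero_notMem_interior_sub Ω₁ Ω₂
  refine ⟨hiff, fun hE => ?_⟩
  have h0 := hiff.1 hE
  exact ⟨interior_inter_eq_empty_of_zero_notMem_interior_sub h0,
    inter_comm Ω₁ _ ▸ inter_interior_eq_empty_of_zero_notMem_interior_sub h0⟩

/-- in a separated LCTV space, for nonempty convex sets,
(a) `Ω₁, Ω₂` form an extremal system iff `0 ∉ int(Ω₁ - Ω₂)`;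
(b) extremality implies `(int Ω₁) ∩ Ω₂ = ∅` and `(int Ω₂) ∩ Ω₁ = ∅`. -/
theorem extremalSystem_iff_and_interior_disjoint
    {X : Type*} [AddCommGroup X] [Module ℝ X] [TopologicalSpace X]
    [IsTopologicalAddGroup X] [ContinuousSMul ℝ X] [LocallyConvexSpace ℝ X] [T2Space X]
    (Ω₁ Ω₂ : Set X) (h1 : Ω₁.Nonempty) (h2 : Ω₂.Nonempty)
    (hv1 : Convex ℝ Ω₁) (hv2 : Convex ℝ Ω₂) :
    (ExtremalSystem Ω₁ Ω₂ ↔ (0 : X) ∉ interior (Ω₁ - Ω₂)) ∧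
    (ExtremalSystem Ω₁ Ω₂ → (interior Ω₁) ∩ Ω₂ = ∅ ∧ (interior Ω₂) ∩ Ω₁ = ∅) :=
  extremalSystem_iff_and_interior_disjoint_general Ω₁ Ω₂
end

section
/- Let X be a separated locally convex topological vector space over the reals and let Ω₁, Ω₂ ⊂ X be nonempty convex sets. If Ω₁ and Ω₂ form an extremal system in X and the set difference is solid, i.e., int(Ω₁ − Ω₂) ≠ ∅, then Ω₁ and Ω₂ are separated: there exists x* ∈ X*, x* ≠ 0, with sup{⟨x*,x⟩ : x ∈ Ω₁} ≤ inf{⟨x*,x⟩ : x ∈ Ω₂}. -/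
/-!
If `0` were an interior point of `Ω₁ - Ω₂`, then `-(Ω₁ - Ω₂)` would be a neighbourhood of `0`
and any shift `a` in it would make `Ω₁ + a` meet `Ω₂`; so extremality puts `0` outside the open
convex set `int(Ω₁ - Ω₂)`, and Hahn–Banach separates them. A convex set with nonempty interior
lies in the closure of its interior, so the separating functional is `≤ 0` on all of `Ω₁ - Ω₂`.
-/

open Pointwise

theorem ExtremalSystem.zero_notMem_interior_sub {X : Type*} [AddCommGroup X]
    [TopologicalSpace X] [IsTopologicalAddGroup X] {Ω₁ Ω₂ : Set X}
    (h : ExtremalSystem Ω₁ Ω₂) : (0 : X) ∉ interior (Ω₁ - Ω₂) := by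
  intro h0
  obtain ⟨a, ha, hdisj⟩ := h _ (neg_mem_nhds_zero _ (mem_interior_iff_mem_nhds.1 h0))
  obtain ⟨x₁, hx₁, x₂, hx₂, hx⟩ : ∃ x₁ ∈ Ω₁, ∃ x₂ ∈ Ω₂, x₁ - x₂ = -a := Set.mem_neg.1 ha
  have hshift : x₁ + a = x₂ := by
    rw [← sub_eq_zero, add_sub_right_comm, hx, neg_add_cancel]
  exact (Set.eq_empty_iff_forall_notMem.1 hdisj) x₂ ⟨⟨x₁, hx₁, hshift⟩, hx₂⟩

theorem Convex.forall_le_of_forall_interior_le {𝕜 E β : Type*} [Field 𝕜] [LinearOrder 𝕜]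
    [IsStrictOrderedRing 𝕜] [TopologicalSpace 𝕜] [OrderTopology 𝕜] [AddCommGroup E]
    [Module 𝕜 E] [TopologicalSpace E] [IsTopologicalAddGroup E] [ContinuousSMul 𝕜 E]
    [Preorder β] [TopologicalSpace β] [ClosedIicTopology β] {s : Set E} (hs : Convex 𝕜 s)
    (hs' : (interior s).Nonempty) {f : E → β} (hf : Continuous f) {c : β}
    (h : ∀ x ∈ interior s, f x ≤ c) : ∀ x ∈ s, f x ≤ c := fun _ hx =>
  closure_minimal h (isClosed_Iic.preimage hf)
    (hs.closure_interior_eq_closure_of_nonempty_interior hs' ▸ subset_closure hx)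

theorem Convex.exists_ne_zero_forall_le_of_notMem_interior {E : Type*} [AddCommGroup E]
    [Module ℝ E] [TopologicalSpace E] [IsTopologicalAddGroup E] [ContinuousSMul ℝ E]
    {s : Set E} (hs : Convex ℝ s) (hs' : (interior s).Nonempty) {x : E}
    (hx : x ∉ interior s) : ∃ f : E →L[ℝ] ℝ, f ≠ 0 ∧ ∀ z ∈ s, f z ≤ f x := by
  obtain ⟨f, hf⟩ := geometric_hahn_banach_open_point hs.interior isOpen_interior hx
  obtain ⟨y, hy⟩ := hs'
  refine ⟨f, fun hf0 => by simpa [hf0] using hf y hy, ?_⟩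
  exact hs.forall_le_of_forall_interior_le ⟨y, hy⟩ f.continuous fun z hz => (hf z hz).le

theorem extremalSystem_separation_general
    {X : Type*} [AddCommGroup X] [Module ℝ X] [TopologicalSpace X]
    [IsTopologicalAddGroup X] [ContinuousSMul ℝ X]
    (Ω₁ Ω₂ : Set X)
    (hv1 : Convex ℝ Ω₁) (hv2 : Convex ℝ Ω₂)
    (hext : ExtremalSystem Ω₁ Ω₂)
    (hsolid : (interior (Ω₁ - Ω₂)).Nonempty) :
    ∃ f : X →L[ℝ] ℝ, f ≠ 0 ∧
      (⨆ x ∈ Ω₁, (f x : EReal)) ≤ ⨅ x ∈ Ω₂, (f x : EReal) := by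
  obtain ⟨f, hf0, hf⟩ := (hv1.sub hv2).exists_ne_zero_forall_le_of_notMem_interior hsolid
    hext.zero_notMem_interior_sub
  refine ⟨f, hf0, iSup₂_le fun x₁ hx₁ => le_iInf₂ fun x₂ hx₂ => ?_⟩
  have hle := hf _ (Set.sub_mem_sub hx₁ hx₂)
  rw [map_sub, map_zero, sub_nonpos] at hle
  exact EReal.coe_le_coe_iff.2 hle

/-- in a separated LCTV space, if nonempty convex sets `Ω₁, Ω₂` form an
extremal system and `int(Ω₁ - Ω₂) ≠ ∅`, then they can be separated by a nonzero continuous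
linear functional: `sup_{Ω₁} x* ≤ inf_{Ω₂} x*`. -/
theorem extremalSystem_separation
    {X : Type*} [AddCommGroup X] [Module ℝ X] [TopologicalSpace X]
    [IsTopologicalAddGroup X] [ContinuousSMul ℝ X] [LocallyConvexSpace ℝ X] [T2Space X]
    (Ω₁ Ω₂ : Set X) (h1 : Ω₁.Nonempty) (h2 : Ω₂.Nonempty)
    (hv1 : Convex ℝ Ω₁) (hv2 : Convex ℝ Ω₂)
    (hext : ExtremalSystem Ω₁ Ω₂)
    (hsolid : (interior (Ω₁ - Ω₂)).Nonempty) :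
    ∃ f : X →L[ℝ] ℝ, f ≠ 0 ∧
      (⨆ x ∈ Ω₁, (f x : EReal)) ≤ ⨅ x ∈ Ω₂, (f x : EReal) :=
  extremalSystem_separation_general Ω₁ Ω₂ hv1 hv2 hext hsolid
end

section
/- Let X be a separated locally convex topological vector space over the reals and let Ω₁, Ω₂ ⊂ X be nonempty convex sets. If there exists x* ∈ X*, x* ≠ 0, with sup{⟨x*,x⟩ : x ∈ Ω₁} ≤ inf{⟨x*,x⟩ : x ∈ Ω₂}, then Ω₁ and Ω₂ form an extremal system in X. -/
open Pointwise Filter Topology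

/-
Separation says `f x ≤ f y` for `x ∈ Ω₁`, `y ∈ Ω₂`. Pick `u` with `f u < 0`; then
`f (x + t • u) < f x ≤ f y` for every `t > 0`, so `Ω₁ + t • u` misses `Ω₂`, and `t • u` lies in any
given neighborhood of `0` once `t` is small.
-/

theorem forall_le_of_biSup_le_biInf {X : Type*} {s t : Set X} {g : X → ℝ}
    (h : (⨆ x ∈ s, (g x : EReal)) ≤ ⨅ y ∈ t, (g y : EReal)) :
    ∀ x ∈ s, ∀ y ∈ t, g x ≤ g y := fun _ hx _ hy =>
  EReal.coe_le_coe_iff.mp <|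
    (le_biSup (fun x => (g x : EReal)) hx).trans (h.trans (biInf_le (fun y => (g y : EReal)) hy))

theorem ContinuousLinearMap.exists_apply_neg {X : Type*} [AddCommGroup X] [Module ℝ X]
    [TopologicalSpace X] {f : X →L[ℝ] ℝ} (hf : f ≠ 0) : ∃ u, f u < 0 := by
  obtain ⟨v, hv⟩ := f.exists_ne_zero hf
  exact ⟨-(f v) • v, by simpa using mul_self_pos.mpr hv⟩

theorem image_add_inter_eq_empty_of_forall_le {X F : Type*} [AddCommGroup X] [FunLike F X ℝ]
    [AddMonoidHomClass F X ℝ] {Ω₁ Ω₂ : Set X} {f : F} (hle : ∀ x ∈ Ω₁, ∀ y ∈ Ω₂, f x ≤ f y)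
    {a : X} (ha : f a < 0) : ((fun w => w + a) '' Ω₁) ∩ Ω₂ = ∅ := by
  refine Set.eq_empty_of_forall_notMem ?_
  rintro _ ⟨⟨x, hx, rfl⟩, hy⟩
  have := hle x hx _ hy
  rw [map_add] at this
  linarith

theorem ExtremalSystem.of_forall_le {X : Type*} [AddCommGroup X] [Module ℝ X]
    [TopologicalSpace X] [ContinuousSMul ℝ X] {Ω₁ Ω₂ : Set X} {f : X →L[ℝ] ℝ} (hf : f ≠ 0)
    (hle : ∀ x ∈ Ω₁, ∀ y ∈ Ω₂, f x ≤ f y) : ExtremalSystem Ω₁ Ω₂ := by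
  obtain ⟨u, hu⟩ := f.exists_apply_neg hf
  intro V hV
  have hsmul : Tendsto (fun t : ℝ => t • u) (𝓝[>] 0) (𝓝 0) := by
    simpa using ((tendsto_id (α := ℝ)).smul_const u).mono_left (nhdsWithin_le_nhds (a := 0))
  obtain ⟨t, htV, ht⟩ := ((hsmul.eventually hV).and self_mem_nhdsWithin).exists
  refine ⟨t • u, htV, image_add_inter_eq_empty_of_forall_le hle ?_⟩
  simpa using mul_neg_of_pos_of_neg (Set.mem_Ioi.mp ht) hu

theorem separation_implies_extremalSystem_general
    {X : Type*} [AddCommGroup X] [Module ℝ X] [TopologicalSpace X]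
    [ContinuousSMul ℝ X]
    (Ω₁ Ω₂ : Set X)
    (hsep : ∃ f : X →L[ℝ] ℝ, f ≠ 0 ∧
      (⨆ x ∈ Ω₁, (f x : EReal)) ≤ ⨅ x ∈ Ω₂, (f x : EReal)) :
    ExtremalSystem Ω₁ Ω₂ := by
  obtain ⟨f, hf, hsup⟩ := hsep
  exact ExtremalSystem.of_forall_le hf (forall_le_of_biSup_le_biInf hsup)

/-- in a separated LCTV space, if nonempty convex sets `Ω₁, Ω₂` are separated
by a nonzero continuous linear functional (`sup_{Ω₁} x* ≤ inf_{Ω₂} x*`), then they form an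
extremal system. -/
theorem separation_implies_extremalSystem
    {X : Type*} [AddCommGroup X] [Module ℝ X] [TopologicalSpace X]
    [IsTopologicalAddGroup X] [ContinuousSMul ℝ X] [LocallyConvexSpace ℝ X] [T2Space X]
    (Ω₁ Ω₂ : Set X) (h1 : Ω₁.Nonempty) (h2 : Ω₂.Nonempty)
    (hv1 : Convex ℝ Ω₁) (hv2 : Convex ℝ Ω₂)
    (hsep : ∃ f : X →L[ℝ] ℝ, f ≠ 0 ∧
      (⨆ x ∈ Ω₁, (f x : EReal)) ≤ ⨅ x ∈ Ω₂, (f x : EReal)) :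
    ExtremalSystem Ω₁ Ω₂ :=
  separation_implies_extremalSystem_general Ω₁ Ω₂ hsep
end

section
/- Let X be a separated locally convex topological vector space over the reals and let f, g : X → (−∞,∞] be proper convex functions with dom f ∩ dom g ≠ ∅. Assume that (i) one of f, g is finite and continuous at some point of dom f ∩ dom g, or (ii) X is a Banach space, f and g are lower semicontinuous, and ℝ⁺(dom f − dom g) is a closed linear subspace of X. Then the conjugate of the maximum function (f ∨ g)(x) := max{f(x), g(x)} satisfies (f ∨ g)*(x*) = inf_{λ∈[0,1]} [λf + (1−λ)g]*(x*) for all x* ∈ X*, where 0·f := δ_{dom f} and 0·g := δ_{dom g}; moreover, if (f ∨ g)*(x*) ∈ ℝ then this infimum over λ ∈ [0,1] is attained. -/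
/-!
If `(f ∨ g)*(p) ≤ r`, then `max (f x) (g x) ≥ p x - r` everywhere. Over `dom f ∩ dom g` the points
`(f x - p x + r, g x - p x + r)`, enlarged by the nonnegative quadrant, form a convex subset of
`ℝ²` (convexity of `f` and `g`) that misses the open negative quadrant. Separating the two by
Hahn–Banach gives weights `(λ, 1 - λ)` with `λ f + (1 - λ) g ≥ p - r` on the common domain, i.e.
`[λ f + (1 - λ) g]*(p) ≤ r`. The reverse inequality holds since `λ f + (1 - λ) g ≤ f ∨ g`.
Applied to `r = (f ∨ g)*(p)` when it is finite, the same argument gives attainment.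
-/

open Pointwise

/-- Convexity of an `(-∞,∞]`-valued function, expressed via convexity of its epigraph. -/
def ConvexE {X : Type*} [AddCommGroup X] [Module ℝ X] (f : X → EReal) : Prop :=
  Convex ℝ {p : X × ℝ | f p.1 ≤ (p.2 : EReal)}

/-- Effective domain of an `(-∞,∞]`-valued function. -/
def domE {X : Type*} (f : X → EReal) : Set X := {x | f x ≠ ⊤}

/-- Fenchel conjugate. -/
noncomputable def conjE {X : Type*} [AddCommGroup X] [Module ℝ X] [TopologicalSpace X]
    (f : X → EReal) (p : X →L[ℝ] ℝ) : EReal :=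
  ⨆ x : X, ((p x : EReal) - f x)

open Classical in
/-- Indicator function of a set. -/
noncomputable def indicatorE {X : Type*} (Ω : Set X) (x : X) : EReal :=
  if x ∈ Ω then 0 else ⊤

open Classical in
/-- The combination `λ f + (1-λ) g` with the conventions `0·f := δ_{dom f}`,
`0·g := δ_{dom g}`. -/
noncomputable def lamComb {X : Type*} (f g : X → EReal) (l : ℝ) : X → EReal := fun x =>
  if l = 0 then indicatorE (domE f) x + g x
  else if l = 1 then f x + indicatorE (domE g) x
  else (l : EReal) * f x + ((1 - l : ℝ) : EReal) * g x

/-- The (given) topology of `X` is generated by a complete norm compatible with the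
linear structure, i.e. `X` is a Banach space. -/
def IsBanach (X : Type*) [AddCommGroup X] [Module ℝ X] [TopologicalSpace X] : Prop :=
  ∃ nm : X → ℝ,
    (∀ x, nm x = 0 ↔ x = 0) ∧
    (∀ x y, nm (x + y) ≤ nm x + nm y) ∧
    (∀ (c : ℝ) (x : X), nm (c • x) = |c| * nm x) ∧
    (∀ s : Set X, IsOpen s ↔ ∀ x ∈ s, ∃ ε > 0, ∀ y, nm (y - x) < ε → y ∈ s) ∧
    (∀ u : ℕ → X, (∀ ε : ℝ, 0 < ε → ∃ N, ∀ m ≥ N, ∀ n ≥ N, nm (u m - u n) < ε) →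
      ∃ x, Filter.Tendsto u Filter.atTop (nhds x))

lemma nonneg_left_of_forall_neg_lt {α β c : ℝ}
    (h : ∀ u v : ℝ, u < 0 → v < 0 → α * u + β * v < c) : 0 ≤ α := by
  by_contra! hα
  set t := (|β| + |c| + 1) / -α
  have ht : 0 < t := div_pos (by positivity) (by linarith)
  have hαt : α * -t = |β| + |c| + 1 := by simp only [t]; field_simp [hα.ne]
  linarith [h (-t) (-1) (by linarith) (by norm_num), le_abs_self β, le_abs_self c]

lemma nonneg_of_forall_neg_lt {α β c : ℝ}
    (h : ∀ u v : ℝ, u < 0 → v < 0 → α * u + β * v < c) : 0 ≤ α ∧ 0 ≤ β ∧ 0 ≤ c := by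
  have hα := nonneg_left_of_forall_neg_lt h
  have hβ : 0 ≤ β := nonneg_left_of_forall_neg_lt (β := α) (c := c) fun u v hu hv => by
    linarith [h v u hv hu]
  refine ⟨hα, hβ, ?_⟩
  by_contra! hc
  have hk : 0 < α + β + 1 := by linarith
  have hε : c / (α + β + 1) < 0 := div_neg_of_neg_of_pos hc hk
  have hlt := h _ _ hε hε
  have e : α * (c / (α + β + 1)) + β * (c / (α + β + 1)) = c - c / (α + β + 1) := by
    field_simp; ring
  linarith

lemma Convex.exists_weight_nonneg_of_max_nonneg {C : Set (ℝ × ℝ)} (hC : Convex ℝ C)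
    (h : ∀ w ∈ C, 0 ≤ max w.1 w.2) :
    ∃ l ∈ Set.Icc (0 : ℝ) 1, ∀ w ∈ C, 0 ≤ l * w.1 + (1 - l) * w.2 := by
  rcases C.eq_empty_or_nonempty with rfl | ⟨w₀, hw₀⟩
  · exact ⟨0, Set.left_mem_Icc.2 zero_le_one, by simp⟩
  have hdisj : Disjoint (Set.Iio 0 ×ˢ Set.Iio 0) C :=
    Set.disjoint_left.2 fun w ⟨h₁, h₂⟩ hw => (h w hw).not_gt (max_lt h₁ h₂)
  obtain ⟨φ, c, hφQ, hφC⟩ := geometric_hahn_banach_open ((convex_Iio 0).prod (convex_Iio 0))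
    (isOpen_Iio.prod isOpen_Iio) hC hdisj
  set α := φ (1, 0)
  set β := φ (0, 1)
  have hφ : ∀ w : ℝ × ℝ, φ w = α * w.1 + β * w.2 := fun w => by
    conv_lhs => rw [show w = w.1 • ((1 : ℝ), (0 : ℝ)) + w.2 • ((0 : ℝ), (1 : ℝ)) by ext <;> simp]
    simp only [map_add, map_smul, smul_eq_mul, α, β]; ring
  obtain ⟨hα, hβ, hc⟩ := nonneg_of_forall_neg_lt fun u v hu hv => by
    simpa only [hφ] using hφQ (u, v) ⟨hu, hv⟩
  have hαβ : 0 < α + β := by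
    by_contra! hle
    have hα0 : α = 0 := by linarith
    have hβ0 : β = 0 := by linarith
    have h₀ := hφC w₀ hw₀
    have h₁ := hφQ (-1, -1) ⟨by norm_num, by norm_num⟩
    simp only [hφ, hα0, hβ0] at h₀ h₁
    linarith
  refine ⟨α / (α + β), ⟨by positivity, (div_le_one hαβ).2 (by linarith)⟩, fun w hw => ?_⟩
  have e : α / (α + β) * w.1 + (1 - α / (α + β)) * w.2 = (α * w.1 + β * w.2) / (α + β) := by
    field_simp; ring
  rw [e]
  exact div_nonneg (hc.trans (hφ w ▸ hφC w hw)) hαβ.le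

lemma ConvexOn.exists_weight_nonneg_of_max_nonneg {E : Type*} [AddCommGroup E] [Module ℝ E]
    {s : Set E} {F G : E → ℝ} (hF : ConvexOn ℝ s F) (hG : ConvexOn ℝ s G)
    (h : ∀ x ∈ s, 0 ≤ max (F x) (G x)) :
    ∃ l ∈ Set.Icc (0 : ℝ) 1, ∀ x ∈ s, 0 ≤ l * F x + (1 - l) * G x := by
  set C : Set (ℝ × ℝ) := {w | ∃ x ∈ s, F x ≤ w.1 ∧ G x ≤ w.2}
  have hC : Convex ℝ C := by
    rintro w ⟨x, hx, hFx, hGx⟩ w' ⟨y, hy, hFy, hGy⟩ a b ha hb hab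
    refine ⟨a • x + b • y, hF.1 hx hy ha hb hab, ?_, ?_⟩
    · calc F (a • x + b • y) ≤ a * F x + b * F y := hF.2 hx hy ha hb hab
        _ ≤ (a • w + b • w').1 := by simp only [Prod.fst_add, Prod.smul_fst, smul_eq_mul]; gcongr
    · calc G (a • x + b • y) ≤ a * G x + b * G y := hG.2 hx hy ha hb hab
        _ ≤ (a • w + b • w').2 := by simp only [Prod.snd_add, Prod.smul_snd, smul_eq_mul]; gcongr
  obtain ⟨l, hl, hlC⟩ := hC.exists_weight_nonneg_of_max_nonneg fun w ⟨x, hx, hFx, hGx⟩ =>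
    (h x hx).trans (max_le_max hFx hGx)
  exact ⟨l, hl, fun x hx => hlC (F x, G x) ⟨x, hx, le_rfl, le_rfl⟩⟩

lemma ConvexE.convexOn_toReal {X : Type*} [AddCommGroup X] [Module ℝ X] {f : X → EReal}
    (hf : ConvexE f) (hbot : ∀ x, f x ≠ ⊥) :
    ConvexOn ℝ (domE f) fun x => (f x).toReal := by
  have key : ∀ x ∈ domE f, ∀ y ∈ domE f, ∀ a b : ℝ, 0 ≤ a → 0 ≤ b → a + b = 1 →
      f (a • x + b • y) ≤ ((a * (f x).toReal + b * (f y).toReal : ℝ) : EReal) :=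
    fun x hx y hy a b ha hb hab =>
      hf (x := (x, (f x).toReal)) (EReal.coe_toReal hx (hbot x)).ge
        (y := (y, (f y).toReal)) (EReal.coe_toReal hy (hbot y)).ge ha hb hab
  refine ⟨fun x hx y hy a b ha hb hab => ne_top_of_le_ne_top (EReal.coe_ne_top _)
    (key x hx y hy a b ha hb hab), fun x hx y hy a b ha hb hab => ?_⟩
  simpa only [smul_eq_mul, EReal.toReal_coe] using
    EReal.toReal_le_toReal (key x hx y hy a b ha hb hab) (hbot _) (EReal.coe_ne_top _)

section LamComb

variable {X : Type*} {f g : X → EReal} {x : X}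

lemma lamComb_coe {a b : ℝ} (ha : f x = a) (hb : g x = b) (l : ℝ) :
    lamComb f g l x = ((l * a + (1 - l) * b : ℝ) : EReal) := by
  have hxf : x ∈ domE f := by simp [domE, ha]
  have hxg : x ∈ domE g := by simp [domE, hb]
  unfold lamComb indicatorE
  split_ifs <;> simp_all

lemma lamComb_eq_top {l : ℝ} (hl : l ∈ Set.Icc (0 : ℝ) 1) (hfx : f x ≠ ⊥) (hgx : g x ≠ ⊥)
    (hx : f x = ⊤ ∨ g x = ⊤) : lamComb f g l x = ⊤ := by
  obtain ⟨hl0, hl1⟩ := hl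
  have hne : ∀ t : ℝ, 0 ≤ t → ∀ y : EReal, y ≠ ⊥ → (t : EReal) * y ≠ ⊥ := fun t ht y hy =>
    (EReal.mul_ne_bot _ _).2 ⟨.inl (EReal.coe_ne_bot t), .inr hy, .inl (EReal.coe_ne_top t),
      .inl (EReal.coe_nonneg.2 ht)⟩
  have hind : ∀ Ω : Set X, indicatorE Ω x ≠ ⊥ := fun Ω => by
    unfold indicatorE; split_ifs <;> simp
  have hfx' : f x = ⊤ → indicatorE (domE f) x = ⊤ := fun h => by simp [indicatorE, domE, h]
  have hgx' : g x = ⊤ → indicatorE (domE g) x = ⊤ := fun h => by simp [indicatorE, domE, h]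
  unfold lamComb
  split_ifs with h0 h1
  · rcases hx with hx | hx
    · rw [hfx' hx, EReal.top_add_of_ne_bot hgx]
    · rw [hx, EReal.add_top_of_ne_bot (hind _)]
  · rcases hx with hx | hx
    · rw [hx, EReal.top_add_of_ne_bot (hind _)]
    · rw [hgx' hx, EReal.add_top_of_ne_bot hfx]
  have hl0' : 0 < l := lt_of_le_of_ne hl0 (Ne.symm h0)
  have hl1' : 0 < 1 - l := sub_pos.2 (lt_of_le_of_ne hl1 h1)
  rcases hx with hx | hx
  · rw [hx, EReal.coe_mul_top_of_pos hl0', EReal.top_add_of_ne_bot (hne _ hl1'.le _ hgx)]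
  · rw [hx, EReal.coe_mul_top_of_pos hl1', EReal.add_top_of_ne_bot (hne _ hl0 _ hfx)]

lemma lamComb_le_max {l : ℝ} (hl : l ∈ Set.Icc (0 : ℝ) 1) (hfx : f x ≠ ⊥) (hgx : g x ≠ ⊥) :
    lamComb f g l x ≤ max (f x) (g x) := by
  by_cases hx : f x = ⊤ ∨ g x = ⊤
  · rw [lamComb_eq_top hl hfx hgx hx]
    rcases hx with hx | hx <;> simp [hx]
  obtain ⟨hft, hgt⟩ := not_or.1 hx
  lift f x to ℝ using ⟨hft, hfx⟩ with a ha
  lift g x to ℝ using ⟨hgt, hgx⟩ with b hb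
  rw [lamComb_coe ha.symm hb.symm, le_max_iff, EReal.coe_le_coe_iff, EReal.coe_le_coe_iff]
  rcases le_total a b with hab | hab
  · right; nlinarith [hl.1]
  · left; nlinarith [hl.2]

end LamComb

section Conjugate

variable {X : Type*} [AddCommGroup X] [Module ℝ X] [TopologicalSpace X] {f g : X → EReal}

lemma conjE_anti {φ ψ : X → EReal} (h : ∀ x, φ x ≤ ψ x) (p : X →L[ℝ] ℝ) :
    conjE ψ p ≤ conjE φ p :=
  iSup_mono fun x => EReal.sub_le_sub le_rfl (h x)

lemma conjE_le_coe_iff {φ : X → EReal} {p : X →L[ℝ] ℝ} {r : ℝ} :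
    conjE φ p ≤ r ↔ ∀ x, ((p x - r : ℝ) : EReal) ≤ φ x := by
  simp only [conjE, iSup_le_iff]
  refine forall_congr' fun x => ?_
  induction φ x using EReal.rec with
  | bot => simp [-EReal.coe_sub]
  | top => simp
  | coe a =>
    norm_cast
    constructor <;> intro <;> linarith

lemma exists_conjE_lamComb_le (hfbot : ∀ x, f x ≠ ⊥) (hgbot : ∀ x, g x ≠ ⊥)
    (hf : ConvexE f) (hg : ConvexE g) {p : X →L[ℝ] ℝ} {r : ℝ}
    (hr : conjE (fun x => max (f x) (g x)) p ≤ r) :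
    ∃ l ∈ Set.Icc (0 : ℝ) 1, conjE (lamComb f g l) p ≤ r := by
  rw [conjE_le_coe_iff] at hr
  set D := domE f ∩ domE g
  have hD : Convex ℝ D := (hf.convexOn_toReal hfbot).1.inter (hg.convexOn_toReal hgbot).1
  have hp : ConcaveOn ℝ D fun x => p x := p.toLinearMap.concaveOn hD
  have hF : ConvexOn ℝ D fun x => (f x).toReal - p x + r :=
    (((hf.convexOn_toReal hfbot).subset Set.inter_subset_left hD).sub hp).add_const r
  have hG : ConvexOn ℝ D fun x => (g x).toReal - p x + r :=
    (((hg.convexOn_toReal hgbot).subset Set.inter_subset_right hD).sub hp).add_const r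
  obtain ⟨l, hl, hlD⟩ := hF.exists_weight_nonneg_of_max_nonneg hG fun x ⟨hft, hgt⟩ => by
    have hrx := hr x
    lift f x to ℝ using ⟨hft, hfbot x⟩ with a ha
    lift g x to ℝ using ⟨hgt, hgbot x⟩ with b hb
    rw [le_max_iff, EReal.coe_le_coe_iff, EReal.coe_le_coe_iff] at hrx
    rw [le_max_iff, EReal.toReal_coe, EReal.toReal_coe]
    rcases hrx with h | h
    · exact .inl (by linarith)
    · exact .inr (by linarith)
  refine ⟨l, hl, conjE_le_coe_iff.2 fun x => ?_⟩
  by_cases hx : f x = ⊤ ∨ g x = ⊤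
  · rw [lamComb_eq_top hl (hfbot x) (hgbot x) hx]
    exact le_top
  obtain ⟨hft, hgt⟩ := not_or.1 hx
  have hlx := hlD x ⟨hft, hgt⟩
  lift f x to ℝ using ⟨hft, hfbot x⟩ with a ha
  lift g x to ℝ using ⟨hgt, hgbot x⟩ with b hb
  rw [EReal.toReal_coe, EReal.toReal_coe] at hlx
  rw [lamComb_coe ha.symm hb.symm, EReal.coe_le_coe_iff]
  linarith

end Conjugate

theorem conjugate_max_rule_general
    {X : Type*} [AddCommGroup X] [Module ℝ X] [TopologicalSpace X]
    (f g : X → EReal)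
    (hfbot : ∀ x, f x ≠ ⊥) (hgbot : ∀ x, g x ≠ ⊥)
    (hf : ConvexE f) (hg : ConvexE g) :
    ∀ p : X →L[ℝ] ℝ,
      conjE (fun x => max (f x) (g x)) p
        = ⨅ l ∈ Set.Icc (0 : ℝ) 1, conjE (lamComb f g l) p ∧
      (conjE (fun x => max (f x) (g x)) p ≠ ⊤ →
       conjE (fun x => max (f x) (g x)) p ≠ ⊥ →
        ∃ l ∈ Set.Icc (0 : ℝ) 1,
          conjE (fun x => max (f x) (g x)) p = conjE (lamComb f g l) p) := by
  intro p
  have hle : ∀ l ∈ Set.Icc (0 : ℝ) 1,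
      conjE (fun x => max (f x) (g x)) p ≤ conjE (lamComb f g l) p := fun l hl =>
    conjE_anti (fun x => lamComb_le_max hl (hfbot x) (hgbot x)) p
  refine ⟨le_antisymm (le_iInf₂ hle) (EReal.le_of_forall_lt_iff_le.1 fun r hr => ?_),
    fun htop hbot => ?_⟩
  · obtain ⟨l, hl, hlr⟩ := exists_conjE_lamComb_le hfbot hgbot hf hg hr.le
    exact (iInf₂_le l hl).trans hlr
  · obtain ⟨l, hl, hlr⟩ := exists_conjE_lamComb_le hfbot hgbot hf hg
      (EReal.coe_toReal htop hbot).ge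
    exact ⟨l, hl, le_antisymm (hle l hl) (hlr.trans (EReal.coe_toReal htop hbot).le)⟩

/-- conjugate of the maximum of two convex functions:
`(f ∨ g)*(x*) = inf_{λ ∈ [0,1]} [λ f + (1-λ) g]*(x*)`, the infimum being attained
whenever `(f ∨ g)*(x*)` is finite, under either (i) continuity of `f` or `g` at a
common domain point, or (ii) `X` Banach, `f, g` l.s.c. and `ℝ⁺(dom f - dom g)`
a closed linear subspace. -/
theorem conjugate_max_rule
    {X : Type*} [AddCommGroup X] [Module ℝ X] [TopologicalSpace X]
    [IsTopologicalAddGroup X] [ContinuousSMul ℝ X] [LocallyConvexSpace ℝ X] [T2Space X]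
    (f g : X → EReal)
    (hfbot : ∀ x, f x ≠ ⊥) (hgbot : ∀ x, g x ≠ ⊥)
    (hfdom : (domE f).Nonempty) (hgdom : (domE g).Nonempty)
    (hf : ConvexE f) (hg : ConvexE g)
    (hdom : (domE f ∩ domE g).Nonempty)
    (hcase :
      (∃ xb ∈ domE f ∩ domE g, ContinuousAt f xb ∨ ContinuousAt g xb) ∨
      (IsBanach X ∧ LowerSemicontinuous f ∧ LowerSemicontinuous g ∧
        ∃ L : Submodule ℝ X, IsClosed (L : Set X) ∧
          posSpan (domE f - domE g) = (L : Set X))) :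
    ∀ p : X →L[ℝ] ℝ,
      conjE (fun x => max (f x) (g x)) p
        = ⨅ l ∈ Set.Icc (0 : ℝ) 1, conjE (lamComb f g l) p ∧
      (conjE (fun x => max (f x) (g x)) p ≠ ⊤ →
       conjE (fun x => max (f x) (g x)) p ≠ ⊥ →
        ∃ l ∈ Set.Icc (0 : ℝ) 1,
          conjE (fun x => max (f x) (g x)) p = conjE (lamComb f g l) p) :=
  conjugate_max_rule_general f g hfbot hgbot hf hg
end

section
/- Let X and Y be separated locally convex topological vector spaces over the reals, let A : X → Y be a continuous linear mapping, and let g : Y → (−∞,∞] be a proper convex function. Assume that (i) g is finite and continuous at some point of AX, or (ii) X and Y are Banach spaces, g is lower semicontinuous, and ℝ⁺(AX − dom g) is a closed linear subspace of Y. Then ∂(g ∘ A)(x̄) = A*∂g(Ax̄) := {A*y* : y* ∈ ∂g(Ax̄)} for every x̄ ∈ dom(g ∘ A). -/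
/-!
For `p ∈ ∂(g ∘ A)(x̄)` put `c = g(A x̄) - p x̄`, so that `p + c ≤ g ∘ A`. The strict epigraph of the
value function `φ(v) = inf_x (g(A x + v) - p x - c)` is convex and misses the origin. Under (i) it
contains `U × (M, ∞)` for a neighbourhood `U` of `0` in `Y`; under (ii) the same holds inside the
closed subspace `L`, which contains `dom φ`. Hahn–Banach then gives a continuous linear `q ≤ φ`
(extended from `L` to `Y` in case (ii)), i.e. `q (y - A x) + p x + c ≤ g y` for all `x, y`; this
forces `q ∘ A = p` and `q ∈ ∂g(A x̄)`.

In case (ii), `U` is the set of `v ∈ L` with `g (A x + v) ≤ p x + c + K` for some `x` in a unit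
ball. It is convex, absorbing in `L` because `ℝ⁺(AX - dom g) = L`, and cs-closed because `g` is
lower semicontinuous and `X` is complete. By Baire's theorem its closure is a neighbourhood of `0`,
and cs-closedness removes the closure.
-/

open Pointwise

/-- Subdifferential of `f` at `xb`. -/
def subdiffE {X : Type*} [AddCommGroup X] [Module ℝ X] [TopologicalSpace X]
    (f : X → EReal) (xb : X) : Set (X →L[ℝ] ℝ) :=
  {p | ∀ x : X, ((p (x - xb) : ℝ) : EReal) ≤ f x - f xb}

open Filter Topology Set Metric

theorem ConvexE.le_combo {E : Type*} [AddCommGroup E] [Module ℝ E] {f : E → EReal}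
    (hf : ConvexE f) {y₁ y₂ : E} {r₁ r₂ a b : ℝ} (h₁ : f y₁ ≤ r₁) (h₂ : f y₂ ≤ r₂)
    (ha : 0 ≤ a) (hb : 0 ≤ b) (hab : a + b = 1) :
    f (a • y₁ + b • y₂) ≤ ((a * r₁ + b * r₂ : ℝ) : EReal) :=
  hf (x := (y₁, r₁)) h₁ (y := (y₂, r₂)) h₂ ha hb hab

theorem ConvexE.lt_combo {E : Type*} [AddCommGroup E] [Module ℝ E] {f : E → EReal}
    (hf : ConvexE f) {y₁ y₂ : E} {r₁ r₂ a b : ℝ} (h₁ : f y₁ < r₁) (h₂ : f y₂ < r₂)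
    (ha : 0 ≤ a) (hb : 0 ≤ b) (hab : a + b = 1) :
    f (a • y₁ + b • y₂) < ((a * r₁ + b * r₂ : ℝ) : EReal) := by
  obtain ⟨s₁, hs₁, hsr₁⟩ := EReal.lt_iff_exists_real_btwn.1 h₁
  obtain ⟨s₂, hs₂, hsr₂⟩ := EReal.lt_iff_exists_real_btwn.1 h₂
  rw [EReal.coe_lt_coe_iff] at hsr₁ hsr₂
  refine (hf.le_combo hs₁.le hs₂.le ha hb hab).trans_lt (EReal.coe_lt_coe_iff.2 ?_)
  rcases ha.eq_or_lt with rfl | ha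
  · obtain rfl : b = 1 := by linarith
    linarith
  · nlinarith

theorem mem_subdiffE_iff {E : Type*} [AddCommGroup E] [Module ℝ E] [TopologicalSpace E]
    {f : E → EReal} {xb : E} {γ : ℝ} (hγ : f xb = γ) {p : E →L[ℝ] ℝ} :
    p ∈ subdiffE f xb ↔ ∀ x, ((p x + (γ - p xb) : ℝ) : EReal) ≤ f x := by
  refine forall_congr' fun x => ?_
  rw [hγ, EReal.le_sub_iff_add_le (by simp) (by simp), ← EReal.coe_add, map_sub,
    sub_add_eq_add_sub, add_sub_assoc]

theorem subset_posSpan {E : Type*} [MulAction ℝ E] (Ω : Set E) : Ω ⊆ posSpan Ω :=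
  fun v hv => ⟨1, one_pos, v, hv, (one_smul ℝ v).symm⟩

theorem ContinuousLinearMap.eq_zero_of_forall_le {E : Type*} [AddCommGroup E] [Module ℝ E]
    [TopologicalSpace E] (f : E →L[ℝ] ℝ) {M : ℝ} (h : ∀ x, f x ≤ M) : f = 0 := by
  ext x
  by_contra hx
  have := h (((M + 1) / f x) • x)
  rw [map_smul, smul_eq_mul, div_mul_cancel₀ _ hx] at this
  linarith

theorem Convex.exists_forall_le_of_prod_Ioi_subset {V : Type*} [AddCommGroup V] [Module ℝ V]
    [TopologicalSpace V] [IsTopologicalAddGroup V] [ContinuousSMul ℝ V] {S : Set (V × ℝ)}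
    (hS : Convex ℝ S) (h0 : (0 : V × ℝ) ∉ S) {U : Set V} (hU : U ∈ 𝓝 0) {M : ℝ}
    (hUM : U ×ˢ Ioi M ⊆ S) : ∃ ℓ : V →L[ℝ] ℝ, ∀ z ∈ S, ℓ z.1 ≤ z.2 := by
  have hint : ((0 : V), |M| + 1) ∈ interior S :=
    interior_mono hUM (mem_interior_iff_mem_nhds.2 (prod_mem_nhds hU
      (Ioi_mem_nhds (by linarith [le_abs_self M]))))
  obtain ⟨f, hf⟩ := geometric_hahn_banach_open_point hS.interior isOpen_interior
    (fun h => h0 (interior_subset h))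
  rw [map_zero] at hf
  have hfS : ∀ z ∈ S, f z ≤ 0 := fun z hz =>
    closure_minimal (fun w hw => (hf w hw).le) (isClosed_le f.continuous continuous_const)
      ((hS.closure_interior_eq_closure_of_nonempty_interior ⟨_, hint⟩).symm ▸ subset_closure hz)
  have hsplit : ∀ z : V × ℝ, f z = f (z.1, 0) + z.2 * f (0, 1) := fun z => by
    rw [← smul_eq_mul, ← map_smul, ← map_add]
    simp
  have hc : f (0, 1) < 0 := by
    have := hf _ hint
    rw [hsplit, Prod.mk_zero_zero, map_zero, zero_add] at this
    nlinarith [abs_nonneg M]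
  refine ⟨(-f (0, 1))⁻¹ • f.comp (ContinuousLinearMap.inl ℝ V ℝ), fun z hz => ?_⟩
  have := hfS z hz
  rw [hsplit] at this
  change (-f (0, 1))⁻¹ * f (z.1, 0) ≤ z.2
  rw [inv_mul_le_iff₀ (by linarith)]
  linarith

section ValueFunction

variable {X Y : Type*} [AddCommGroup X] [Module ℝ X] [TopologicalSpace X]
  [AddCommGroup Y] [Module ℝ Y] [TopologicalSpace Y]

/-- The strict epigraph of the value function `v ↦ inf_x (g (A x + v) - p x - c)`. -/
def valueEpi (A : X →L[ℝ] Y) (g : Y → EReal) (p : X →L[ℝ] ℝ) (c : ℝ) : Set (Y × ℝ) :=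
  {z | ∃ x, g (A x + z.1) < ((z.2 + (p x + c) : ℝ) : EReal)}

variable {A : X →L[ℝ] Y} {g : Y → EReal} {p : X →L[ℝ] ℝ} {c : ℝ}

theorem convex_valueEpi (hg : ConvexE g) : Convex ℝ (valueEpi A g p c) := by
  rintro ⟨v₁, r₁⟩ ⟨x₁, h₁⟩ ⟨v₂, r₂⟩ ⟨x₂, h₂⟩ a b ha hb hab
  refine ⟨a • x₁ + b • x₂, ?_⟩
  change g (A _ + (a • v₁ + b • v₂)) < ((a * r₁ + b * r₂ + _ : ℝ) : EReal)
  have hpt : A (a • x₁ + b • x₂) + (a • v₁ + b • v₂) = a • (A x₁ + v₁) + b • (A x₂ + v₂) := by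
    simp only [map_add, map_smul]
    module
  have hval : a * r₁ + b * r₂ + (p (a • x₁ + b • x₂) + c)
      = a * (r₁ + (p x₁ + c)) + b * (r₂ + (p x₂ + c)) := by
    simp only [map_add, map_smul, smul_eq_mul]
    linear_combination (-c) * hab
  rw [hpt, hval]
  exact hg.lt_combo h₁ h₂ ha hb hab

theorem zero_notMem_valueEpi (hmin : ∀ x, ((p x + c : ℝ) : EReal) ≤ g (A x)) :
    (0 : Y × ℝ) ∉ valueEpi A g p c := fun ⟨x, hx⟩ =>
  (hmin x).not_gt (by simpa using hx)

theorem exists_comp_eq_of_forall_mem_valueEpi {q : Y →L[ℝ] ℝ}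
    (hq : ∀ z ∈ valueEpi A g p c, q z.1 ≤ z.2) {x₀ : X} (hx₀ : g (A x₀) ≠ ⊤) :
    q.comp A = p ∧ ∀ y, ((q y + c : ℝ) : EReal) ≤ g y := by
  have hle : ∀ x y, ((q (y - A x) + (p x + c) : ℝ) : EReal) ≤ g y := by
    refine fun x y => EReal.le_of_forall_lt_iff_le.1 fun t ht => EReal.coe_le_coe_iff.2 ?_
    have := hq (y - A x, t - (p x + c)) ⟨x, by simpa using ht⟩
    linarith
  refine ⟨?_, fun y => by simpa using hle 0 y⟩
  obtain ⟨M, hM, -⟩ := EReal.lt_iff_exists_real_btwn.1 hx₀.lt_top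
  have hbdd : ∀ x, (p - q.comp A) x ≤ M - c - q (A x₀) := fun x => by
    have := EReal.coe_lt_coe_iff.1 ((hle x (A x₀)).trans_lt hM)
    simp only [map_sub] at this
    change p x - q (A x) ≤ _
    linarith
  exact (sub_eq_zero.1 ((p - q.comp A).eq_zero_of_forall_le hbdd)).symm

theorem fst_mem_of_mem_valueEpi {L : Submodule ℝ Y} (hL : posSpan (range A - domE g) = L)
    {z : Y × ℝ} (hz : z ∈ valueEpi A g p c) : z.1 ∈ L := by
  obtain ⟨x, hx⟩ := hz
  have : A x - (A x + z.1) ∈ (L : Set Y) :=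
    hL ▸ subset_posSpan _ (sub_mem_sub (mem_range_self x) hx.ne_top)
  simpa using L.neg_mem this

theorem exists_ne_top_of_posSpan_eq {L : Submodule ℝ Y} (hL : posSpan (range A - domE g) = L) :
    ∃ x, g (A x) ≠ ⊤ := by
  obtain ⟨s, hs, _, ⟨_, ⟨x, rfl⟩, y, hy, rfl⟩, h0⟩ : (0 : Y) ∈ posSpan (range A - domE g) :=
    hL ▸ L.zero_mem
  rw [eq_comm, smul_eq_zero, sub_eq_zero] at h0
  exact ⟨x, (h0.resolve_left hs.ne') ▸ hy⟩

theorem exists_comp_eq_of_continuousAt [IsTopologicalAddGroup Y] [ContinuousSMul ℝ Y]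
    (hg : ConvexE g) (hmin : ∀ x, ((p x + c : ℝ) : EReal) ≤ g (A x)) {x₀ : X}
    (hx₀ : g (A x₀) ≠ ⊤) (hcont : ContinuousAt g (A x₀)) :
    ∃ q : Y →L[ℝ] ℝ, q.comp A = p ∧ ∀ y, ((q y + c : ℝ) : EReal) ≤ g y := by
  obtain ⟨s, hs, -⟩ := EReal.lt_iff_exists_real_btwn.1 hx₀.lt_top
  have hU : ∀ᶠ v in 𝓝 (0 : Y), g (A x₀ + v) < s :=
    ((hcont.tendsto.comp (by simpa using (continuous_const_add (A x₀)).tendsto 0))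
      |>.eventually_lt_const hs)
  obtain ⟨q, hq⟩ := (convex_valueEpi hg).exists_forall_le_of_prod_Ioi_subset
    (zero_notMem_valueEpi hmin) hU (M := s - (p x₀ + c)) fun z ⟨hv, hr⟩ =>
      ⟨x₀, hv.trans (EReal.coe_lt_coe_iff.2 (by rw [mem_Ioi] at hr; linarith))⟩
  exact ⟨q, exists_comp_eq_of_forall_mem_valueEpi hq hx₀⟩

end ValueFunction

section CSClosed

/-- Cs-closedness in the sense of Jameson. -/
def IsCSClosed {E : Type*} [AddCommGroup E] [Module ℝ E] [TopologicalSpace E] (C : Set E) :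
    Prop :=
  ∀ (t : ℕ → ℝ) (z : ℕ → E) (w : E), (∀ n, 0 ≤ t n) → HasSum t 1 → (∀ n, z n ∈ C) →
    Tendsto (fun N => ∑ n ∈ Finset.range N, t n • z n) atTop (𝓝 w) → w ∈ C

theorem Convex.isCSClosed {E : Type*} [AddCommGroup E] [Module ℝ E] [TopologicalSpace E]
    [ContinuousSMul ℝ E] {C : Set E} (hC : Convex ℝ C) (hcl : IsClosed C) : IsCSClosed C := by
  intro t z w ht0 ht1 hz hw
  have hS := ht1.tendsto_sum_nat
  refine hcl.mem_of_tendsto (f := fun N => (Finset.range N).centerMass t z) ?_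
    ((hS.eventually_const_lt one_pos).mono fun N hN =>
      hC.centerMass_mem (fun n _ => ht0 n) hN fun n _ => hz n)
  simpa [Finset.centerMass] using (hS.inv₀ one_ne_zero).smul hw

theorem IsCSClosed.image_snd {E F : Type*} [NormedAddCommGroup E] [NormedSpace ℝ E]
    [CompleteSpace E] [AddCommGroup F] [Module ℝ F] [TopologicalSpace F] {D : Set (E × F)}
    (hD : IsCSClosed D) (hb : Bornology.IsBounded (Prod.fst '' D)) :
    IsCSClosed (Prod.snd '' D) := by
  intro t v w ht0 ht1 hv hw
  choose z hzD hzv using hv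
  obtain ⟨R, hR⟩ := hb.exists_norm_le
  have hsum : Summable fun n => t n • (z n).1 :=
    .of_norm_bounded (ht1.summable.mul_right R) fun n => by
      rw [norm_smul, Real.norm_of_nonneg (ht0 n)]
      exact mul_le_mul_of_nonneg_left (hR _ ⟨z n, hzD n, rfl⟩) (ht0 n)
  refine ⟨(∑' n, t n • (z n).1, w), hD t z _ ht0 ht1 hzD ?_, rfl⟩
  convert hsum.hasSum.tendsto_sum_nat.prodMk_nhds hw using 2 with N
  ext <;> simp [Prod.fst_sum, Prod.snd_sum, hzv]

theorem IsCSClosed.ball_subset {E : Type*} [NormedAddCommGroup E] [NormedSpace ℝ E]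
    {C : Set E} (hC : IsCSClosed C) {δ : ℝ} (h : ball (0 : E) δ ⊆ closure C) :
    ball (0 : E) (δ / 2) ⊆ C := by
  have hstep : ∀ z : ball (0 : E) δ, ∃ c ∈ C, (2 : ℝ) • ((z : E) - c) ∈ ball (0 : E) δ := by
    rintro ⟨z, hz⟩
    have hδ : 0 < δ := pos_of_mem_ball hz
    obtain ⟨c, hc, hzc⟩ := Metric.mem_closure_iff.1 (h hz) (δ / 2) (by positivity)
    refine ⟨c, hc, ?_⟩
    rw [mem_ball_zero_iff, norm_smul, ← dist_eq_norm, Real.norm_two]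
    linarith
  choose c hcC hcδ using hstep
  intro w hw
  have h2w : (2 : ℝ) • w ∈ ball (0 : E) δ := by
    rw [mem_ball_zero_iff, norm_smul, Real.norm_two]
    rw [mem_ball_zero_iff] at hw
    linarith
  -- `u 0 = 2 w` and `u (n + 1) = 2 (u n - c (u n))`
  let u : ℕ → ball (0 : E) δ := fun n => Nat.rec ⟨_, h2w⟩ (fun _ z => ⟨_, hcδ z⟩) n
  have htel : ∀ N, ∑ n ∈ Finset.range N, (2⁻¹ : ℝ) ^ (n + 1) • c (u n)
      = w - (2⁻¹ : ℝ) ^ (N + 1) • (u N).1 := by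
    intro N
    induction N with
    | zero => simp [u, smul_smul]
    | succ N ih =>
      rw [Finset.sum_range_succ, ih]
      change _ = w - _ • ((2 : ℝ) • ((u N).1 - c (u N)))
      module
  have hgeom : Tendsto (fun N : ℕ => (2⁻¹ : ℝ) ^ (N + 1) * δ) atTop (𝓝 0) := by
    simpa using ((tendsto_pow_atTop_nhds_zero_of_lt_one (by norm_num) (by norm_num :
      (2⁻¹ : ℝ) < 1)).comp (tendsto_add_atTop_nat 1)).mul_const δ
  have hu : Tendsto (fun N => (2⁻¹ : ℝ) ^ (N + 1) • (u N).1) atTop (𝓝 0) := by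
    refine squeeze_zero_norm (fun N => ?_) hgeom
    rw [norm_smul, Real.norm_of_nonneg (by positivity)]
    exact mul_le_mul_of_nonneg_left (mem_ball_zero_iff.1 (u N).2).le (by positivity)
  refine hC (fun n => (2⁻¹ : ℝ) ^ (n + 1)) (fun n => c (u n)) w (fun n => by positivity) ?_
    (fun n => hcC _) ?_
  · convert hasSum_geometric_two' 1 using 1
    ext n
    rw [pow_succ, inv_pow]
    field_simp
  · simp_rw [htel]
    simpa using tendsto_const_nhds.sub hu

theorem Convex.closure_mem_nhds_zero {E : Type*} [AddCommGroup E] [Module ℝ E]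
    [TopologicalSpace E] [IsTopologicalAddGroup E] [ContinuousSMul ℝ E] [BaireSpace E]
    {C : Set E} (hC : Convex ℝ C) (h0 : (0 : E) ∈ C) (habs : ∀ v, ∃ t : ℝ, 0 < t ∧ t • v ∈ C) :
    closure C ∈ 𝓝 (0 : E) := by
  have hcover : ⋃ n : ℕ, closure (((n : ℝ) + 1) • C) = univ := by
    refine eq_univ_of_forall fun w => ?_
    obtain ⟨t, ht, htw⟩ := habs w
    obtain ⟨n, hn⟩ := exists_nat_gt t⁻¹
    have hn' : (1 : ℝ) ≤ ((n : ℝ) + 1) * t := by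
      rw [inv_lt_iff_one_lt_mul₀ ht] at hn
      nlinarith
    refine mem_iUnion.2 ⟨n, subset_closure ⟨((n : ℝ) + 1)⁻¹ • w, ?_, ?_⟩⟩
    · convert hC.smul_mem_of_zero_mem h0 htw ⟨by positivity, inv_le_one_of_one_le₀ hn'⟩ using 1
      rw [smul_smul, mul_inv, mul_assoc, inv_mul_cancel₀ ht.ne', mul_one]
    · simp [smul_smul, (by positivity : (n : ℝ) + 1 ≠ 0)]
  obtain ⟨n, hn⟩ := nonempty_interior_of_iUnion_of_closed (fun _ => isClosed_closure) hcover
  have hn0 : (n : ℝ) + 1 ≠ 0 := by positivity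
  rw [closure_smul₀' hn0, interior_smul₀ hn0] at hn
  obtain ⟨_, ⟨z, hz, rfl⟩⟩ := hn
  obtain ⟨t, ht, htz⟩ := habs (-z)
  -- `0` lies on the open segment from the interior point `z` to `t • (-z) ∈ C`
  have := hC.closure.combo_interior_self_mem_interior hz (subset_closure htz)
    (a := t / (t + 1)) (b := 1 / (t + 1)) (by positivity) (by positivity) (by field_simp)
  rw [show (t / (t + 1)) • z + (1 / (t + 1)) • t • -z = 0 by module] at this
  exact mem_interior_iff_mem_nhds.1 this

theorem IsCSClosed.mem_nhds_zero {E : Type*} [NormedAddCommGroup E] [NormedSpace ℝ E]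
    [CompleteSpace E] {C : Set E} (hcs : IsCSClosed C) (hC : Convex ℝ C) (h0 : (0 : E) ∈ C)
    (habs : ∀ v, ∃ t : ℝ, 0 < t ∧ t • v ∈ C) : C ∈ 𝓝 (0 : E) := by
  obtain ⟨δ, hδ, hball⟩ := Metric.mem_nhds_iff.1 (hC.closure_mem_nhds_zero h0 habs)
  exact Metric.mem_nhds_iff.2 ⟨δ / 2, by positivity, hcs.ball_subset hball⟩

end CSClosed

section Banach

variable {X Y : Type*} [NormedAddCommGroup X] [NormedSpace ℝ X]
  [NormedAddCommGroup Y] [NormedSpace ℝ Y]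
  {A : X →L[ℝ] Y} {g : Y → EReal} {p : X →L[ℝ] ℝ} {c : ℝ} {L : Submodule ℝ Y}

theorem exists_smul_mem_of_posSpan_eq (hg : ConvexE g) (hL : posSpan (range A - domE g) = L)
    {x₀ : X} {K : ℝ} (hx₀ : g (A x₀) ≤ ((K + (p x₀ + c) : ℝ) : EReal)) (w : L) :
    ∃ t : ℝ, 0 < t ∧ ∃ x ∈ closedBall x₀ 1,
      g (A x + ((t • w : L) : Y)) ≤ ((K + 1 + (p x + c) : ℝ) : EReal) := by
  obtain ⟨s, hs, _, ⟨_, ⟨x', rfl⟩, y', hy', rfl⟩, hw⟩ : -(w : Y) ∈ posSpan (range A - domE g) :=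
    hL ▸ L.neg_mem w.2
  obtain ⟨r, hr, -⟩ := EReal.lt_iff_exists_real_btwn.1 (lt_top_iff_ne_top.2 hy')
  have hy'r : g y' ≤ ((r - (p x' + c) + (p x' + c) : ℝ) : EReal) := by simpa using hr.le
  have small : ∀ a : ℝ, ∀ᶠ θ in 𝓝[>] (0 : ℝ), θ * a ≤ 1 := fun a =>
    (((continuous_mul_const a).tendsto' 0 0 (zero_mul a)).eventually_le_const one_pos).filter_mono
      nhdsWithin_le_nhds
  obtain ⟨θ, hθ0, hθ1, hθr, hθx⟩ : ∃ θ : ℝ, 0 < θ ∧ θ ≤ 1 ∧ θ * (r - (p x' + c) - K) ≤ 1 ∧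
      θ * ‖x' - x₀‖ ≤ 1 := by
    simpa using (eventually_mem_nhdsWithin.and ((small 1).and ((small _).and (small _)))).exists
  refine ⟨θ / s, by positivity, x₀ + θ • (x' - x₀), ?_, ?_⟩
  · rwa [mem_closedBall, dist_eq_norm, add_sub_cancel_left, norm_smul, Real.norm_of_nonneg hθ0.le]
  have hpt : A (x₀ + θ • (x' - x₀)) + (((θ / s) • w : L) : Y) = (1 - θ) • A x₀ + θ • y' := by
    rw [Submodule.coe_smul, ← neg_neg (w : Y), hw, smul_neg, smul_smul,
      div_mul_cancel₀ θ hs.ne', map_add, map_smul, map_sub]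
    module
  rw [hpt]
  refine (hg.le_combo hx₀ hy'r (by linarith) hθ0.le (by ring)).trans (EReal.coe_le_coe_iff.2 ?_)
  simp only [map_add, map_smul, map_sub, smul_eq_mul]
  nlinarith

theorem convex_setOf_apply_add_le (hg : ConvexE g) {K : ℝ} :
    Convex ℝ {z : X × L | g (A z.1 + z.2) ≤ ((K + (p z.1 + c) : ℝ) : EReal)} := by
  rintro ⟨x₁, v₁⟩ h₁ ⟨x₂, v₂⟩ h₂ a b ha hb hab
  change g (A (a • x₁ + b • x₂) + ((a • v₁ + b • v₂ : L) : Y))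
    ≤ ((K + (p (a • x₁ + b • x₂) + c) : ℝ) : EReal)
  have hpt : A (a • x₁ + b • x₂) + ((a • v₁ + b • v₂ : L) : Y)
      = a • (A x₁ + v₁) + b • (A x₂ + v₂) := by
    simp only [map_add, map_smul, Submodule.coe_add, Submodule.coe_smul]
    module
  rw [hpt]
  refine (hg.le_combo h₁ h₂ ha hb hab).trans_eq (congrArg _ ?_)
  simp only [map_add, map_smul, smul_eq_mul]
  linear_combination (K + c) * hab

theorem isClosed_setOf_apply_add_le (hlsc : LowerSemicontinuous g) {K : ℝ} :
    IsClosed {z : X × L | g (A z.1 + z.2) ≤ ((K + (p z.1 + c) : ℝ) : EReal)} :=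
  hlsc.isClosed_epigraph.preimage
    ((by fun_prop : Continuous fun z : X × L => A z.1 + (z.2 : Y)).prodMk
      (continuous_coe_real_ereal.comp (by fun_prop)))

theorem exists_nhds_zero_prod_Ioi_subset_valueEpi [CompleteSpace X] [CompleteSpace Y]
    (hg : ConvexE g) (hlsc : LowerSemicontinuous g) (hLc : IsClosed (L : Set Y))
    (hL : posSpan (range A - domE g) = L) :
    ∃ U ∈ 𝓝 (0 : L), ∃ M : ℝ, U ×ˢ Ioi M ⊆ {z : L × ℝ | ((z.1 : Y), z.2) ∈ valueEpi A g p c} := by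
  have : CompleteSpace L := hLc.completeSpace_coe
  obtain ⟨x₀, hx₀⟩ := exists_ne_top_of_posSpan_eq hL
  obtain ⟨r, hr, -⟩ := EReal.lt_iff_exists_real_btwn.1 hx₀.lt_top
  have hK : g (A x₀) ≤ ((r - (p x₀ + c) + (p x₀ + c) : ℝ) : EReal) := by simpa using hr.le
  set K := r - (p x₀ + c)
  let D : Set (X × L) := {z | z.1 ∈ closedBall x₀ 1} ∩
    {z | g (A z.1 + z.2) ≤ ((K + 1 + (p z.1 + c) : ℝ) : EReal)}
  have hDconv : Convex ℝ D :=
    ((convex_closedBall x₀ 1).linear_preimage (LinearMap.fst ℝ X L)).inter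
      (convex_setOf_apply_add_le hg)
  have hDcl : IsClosed D :=
    (isClosed_closedBall.preimage continuous_fst).inter (isClosed_setOf_apply_add_le hlsc)
  let C : Set L := Prod.snd '' D
  have hC : C ∈ 𝓝 (0 : L) := by
    refine IsCSClosed.mem_nhds_zero ((hDconv.isCSClosed hDcl).image_snd
      ((isBounded_closedBall (x := x₀) (r := 1)).subset ?_))
      (hDconv.linear_image (LinearMap.snd ℝ X L))
      ⟨(x₀, 0), ⟨mem_closedBall_self zero_le_one, ?_⟩, rfl⟩ fun w => ?_
    · rintro _ ⟨z, hz, rfl⟩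
      exact hz.1
    · change g (A x₀ + ((0 : L) : Y)) ≤ ((K + 1 + (p x₀ + c) : ℝ) : EReal)
      rw [Submodule.coe_zero, add_zero]
      exact hK.trans (EReal.coe_le_coe_iff.2 (by linarith))
    · obtain ⟨t, ht, x, hx, hgx⟩ := exists_smul_mem_of_posSpan_eq hg hL hK w
      exact ⟨t, ht, (x, t • w), ⟨hx, hgx⟩, rfl⟩
  refine ⟨C, hC, K + 1, ?_⟩
  rintro ⟨v, r⟩ ⟨⟨⟨x, _⟩, ⟨-, hgx⟩, rfl⟩, hr⟩
  exact ⟨x, hgx.trans_lt (EReal.coe_lt_coe_iff.2 (by rw [mem_Ioi] at hr; linarith))⟩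

theorem exists_comp_eq_of_posSpan_eq [CompleteSpace X] [CompleteSpace Y] (hg : ConvexE g)
    (hlsc : LowerSemicontinuous g) (hmin : ∀ x, ((p x + c : ℝ) : EReal) ≤ g (A x))
    (hLc : IsClosed (L : Set Y)) (hL : posSpan (range A - domE g) = L) :
    ∃ q : Y →L[ℝ] ℝ, q.comp A = p ∧ ∀ y, ((q y + c : ℝ) : EReal) ≤ g y := by
  obtain ⟨U, hU, M, hUM⟩ :=
    exists_nhds_zero_prod_Ioi_subset_valueEpi (p := p) (c := c) hg hlsc hLc hL
  obtain ⟨ℓ, hℓ⟩ := ((convex_valueEpi hg).linear_preimage (L.subtype.prodMap LinearMap.id))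
    |>.exists_forall_le_of_prod_Ioi_subset
      (fun h => zero_notMem_valueEpi hmin (by simpa only [mem_preimage, map_zero] using h)) hU hUM
  obtain ⟨q, hq, -⟩ := exists_extension_norm_eq L ℓ
  obtain ⟨x₀, hx₀⟩ := exists_ne_top_of_posSpan_eq hL
  refine ⟨q, exists_comp_eq_of_forall_mem_valueEpi (fun z hz => ?_) hx₀⟩
  exact (hq _).trans_le (hℓ (⟨z.1, fst_mem_of_mem_valueEpi hL hz⟩, z.2) hz)

end Banach

namespace IsBanach

variable {E : Type*} [AddCommGroup E] [Module ℝ E] [TopologicalSpace E] {nm : E → ℝ}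

/-- Built with `MetricSpace.ofDistTopology`, so that its topology is the given instance itself:
continuous linear maps on `E` remain such for the new structure without any transport. -/
noncomputable abbrev normedAddCommGroup (h0 : ∀ x, nm x = 0 ↔ x = 0)
    (hadd : ∀ x y, nm (x + y) ≤ nm x + nm y) (hsmul : ∀ (c : ℝ) (x : E), nm (c • x) = |c| * nm x)
    (hopen : ∀ s : Set E, IsOpen s ↔ ∀ x ∈ s, ∃ ε > 0, ∀ y, nm (y - x) < ε → y ∈ s) :
    NormedAddCommGroup E where
  norm := nm
  toMetricSpace := MetricSpace.ofDistTopology (fun x y => nm (-x + y))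
    (fun x => by simpa using (h0 0).2 rfl)
    (fun x y => by
      have := hsmul (-1) (-x + y)
      rw [neg_one_smul, abs_neg, abs_one, one_mul, neg_add, neg_neg, add_comm] at this
      exact this.symm)
    (fun x y z => by simpa [add_assoc] using hadd (-x + y) (-y + z))
    (fun s => by simpa only [neg_add_eq_sub] using hopen s)
    (fun x y hxy => by simpa [neg_add_eq_zero] using (h0 _).1 hxy)
  dist_eq _ _ := rfl

theorem completeSpace (h0 : ∀ x, nm x = 0 ↔ x = 0) (hadd : ∀ x y, nm (x + y) ≤ nm x + nm y)
    (hsmul : ∀ (c : ℝ) (x : E), nm (c • x) = |c| * nm x)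
    (hopen : ∀ s : Set E, IsOpen s ↔ ∀ x ∈ s, ∃ ε > 0, ∀ y, nm (y - x) < ε → y ∈ s)
    (hcauchy : ∀ u : ℕ → E, (∀ ε : ℝ, 0 < ε → ∃ N, ∀ m ≥ N, ∀ n ≥ N, nm (u m - u n) < ε) →
      ∃ x, Tendsto u atTop (𝓝 x)) :
    letI := normedAddCommGroup h0 hadd hsmul hopen
    CompleteSpace E :=
  letI := normedAddCommGroup h0 hadd hsmul hopen
  Metric.complete_of_cauchySeq_tendsto fun u hu => hcauchy u fun ε hε =>
    (Metric.cauchySeq_iff.1 hu ε hε).imp fun _ hN m hm n hn => by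
      rw [← neg_add_eq_sub]
      exact hN n hn m hm

end IsBanach

theorem exists_comp_eq_of_isBanach {X Y : Type*} [AddCommGroup X] [Module ℝ X]
    [TopologicalSpace X] [AddCommGroup Y] [Module ℝ Y] [TopologicalSpace Y]
    {A : X →L[ℝ] Y} {g : Y → EReal} {p : X →L[ℝ] ℝ} {c : ℝ} (hX : IsBanach X) (hY : IsBanach Y)
    (hg : ConvexE g) (hlsc : LowerSemicontinuous g)
    (hmin : ∀ x, ((p x + c : ℝ) : EReal) ≤ g (A x)) {L : Submodule ℝ Y}
    (hLc : IsClosed (L : Set Y)) (hL : posSpan (range A - domE g) = L) :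
    ∃ q : Y →L[ℝ] ℝ, q.comp A = p ∧ ∀ y, ((q y + c : ℝ) : EReal) ≤ g y := by
  obtain ⟨nX, hX0, hXadd, hXsmul, hXopen, hXcauchy⟩ := hX
  obtain ⟨nY, hY0, hYadd, hYsmul, hYopen, hYcauchy⟩ := hY
  let _ := IsBanach.normedAddCommGroup hX0 hXadd hXsmul hXopen
  let _ := IsBanach.normedAddCommGroup hY0 hYadd hYsmul hYopen
  let _ : NormedSpace ℝ X := ⟨fun c x => (hXsmul c x).le⟩
  let _ : NormedSpace ℝ Y := ⟨fun c y => (hYsmul c y).le⟩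
  have := IsBanach.completeSpace hX0 hXadd hXsmul hXopen hXcauchy
  have := IsBanach.completeSpace hY0 hYadd hYsmul hYopen hYcauchy
  exact exists_comp_eq_of_posSpan_eq hg hlsc hmin hLc hL

theorem subdifferential_chain_rule_general
    {X Y : Type*} [AddCommGroup X] [Module ℝ X] [TopologicalSpace X]
    [AddCommGroup Y] [Module ℝ Y] [TopologicalSpace Y]
    [IsTopologicalAddGroup Y] [ContinuousSMul ℝ Y]
    (A : X →L[ℝ] Y) (g : Y → EReal)
    (hgbot : ∀ y, g y ≠ ⊥) (hg : ConvexE g)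
    (hcase :
      (∃ x : X, g (A x) ≠ ⊤ ∧ ContinuousAt g (A x)) ∨
      (IsBanach X ∧ IsBanach Y ∧ LowerSemicontinuous g ∧
        ∃ L : Submodule ℝ Y, IsClosed (L : Set Y) ∧
          posSpan (Set.range A - domE g) = (L : Set Y))) :
    ∀ xb : X, g (A xb) ≠ ⊤ →
      subdiffE (fun x => g (A x)) xb
        = (fun q : Y →L[ℝ] ℝ => q.comp A) '' subdiffE g (A xb) := by
  intro xb hxb
  obtain ⟨γ, hγ⟩ : ∃ γ : ℝ, g (A xb) = γ := ⟨_, (EReal.coe_toReal hxb (hgbot _)).symm⟩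
  ext p
  refine ⟨fun hp => ?_, ?_⟩
  · rw [mem_subdiffE_iff (f := fun x => g (A x)) hγ] at hp
    obtain ⟨q, hqA, hq⟩ : ∃ q : Y →L[ℝ] ℝ, q.comp A = p ∧
        ∀ y, ((q y + (γ - p xb) : ℝ) : EReal) ≤ g y := by
      rcases hcase with ⟨x₀, hx₀, hcont⟩ | ⟨hX, hY, hlsc, L, hLc, hL⟩
      · exact exists_comp_eq_of_continuousAt hg hp hx₀ hcont
      · exact exists_comp_eq_of_isBanach hX hY hg hlsc hp hLc hL
    refine ⟨q, (mem_subdiffE_iff hγ).2 fun y => ?_, hqA⟩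
    rw [← ContinuousLinearMap.comp_apply, hqA]
    exact hq y
  · rintro ⟨q, hq, rfl⟩ x
    simpa using hq (A x)

/-- the subdifferential chain rule
`∂(g ∘ A)(x̄) = A* ∂g(A x̄)` for all `x̄ ∈ dom (g ∘ A)`, under either (i) continuity of
`g` at a point of `AX`, or (ii) `X, Y` Banach, `g` l.s.c. and `ℝ⁺(AX - dom g)` a
closed linear subspace of `Y`. -/
theorem subdifferential_chain_rule
    {X Y : Type*} [AddCommGroup X] [Module ℝ X] [TopologicalSpace X]
    [IsTopologicalAddGroup X] [ContinuousSMul ℝ X] [LocallyConvexSpace ℝ X] [T2Space X]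
    [AddCommGroup Y] [Module ℝ Y] [TopologicalSpace Y]
    [IsTopologicalAddGroup Y] [ContinuousSMul ℝ Y] [LocallyConvexSpace ℝ Y] [T2Space Y]
    (A : X →L[ℝ] Y) (g : Y → EReal)
    (hgbot : ∀ y, g y ≠ ⊥) (hgdom : (domE g).Nonempty) (hg : ConvexE g)
    (hcase :
      (∃ x : X, g (A x) ≠ ⊤ ∧ ContinuousAt g (A x)) ∨
      (IsBanach X ∧ IsBanach Y ∧ LowerSemicontinuous g ∧
        ∃ L : Submodule ℝ Y, IsClosed (L : Set Y) ∧
          posSpan (Set.range A - domE g) = (L : Set Y))) :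
    ∀ xb : X, g (A xb) ≠ ⊤ →
      subdiffE (fun x => g (A x)) xb
        = (fun q : Y →L[ℝ] ℝ => q.comp A) '' subdiffE g (A xb) :=
  subdifferential_chain_rule_general A g hgbot hg hcase
end

section
/- Let X and Y be separated locally convex topological vector spaces over the reals, let Y₊ ⊂ Y be a convex cone defining the order y₁ ≺ y₂ iff y₂ − y₁ ∈ Y₊, let f : X → Y be Y₊-convex, and let φ : Y → (−∞,∞] be convex and Y₊-nondecreasing. If there exist x ∈ X and y ∈ Y with f(x) ≺ y such that φ is finite and continuous at y, then for every x̄ ∈ dom(φ ∘ f): ∂(φ ∘ f)(x̄) = ⋃_{y* ∈ ∂φ(f(x̄))} ∂(y* ∘ f)(x̄). -/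
open Pointwise

/-!
Given `p ∈ ∂(φ ∘ f)(x̄)`, the set `C = {(y, r) | ∃ x, f x ≺ y ∧ r ≤ φ (f x̄) + p (x - x̄)}` is
convex because `f` is `Y₊`-convex, and lies below the graph of `φ` because `φ` is
`Y₊`-nondecreasing; hence it misses the strict epigraph of `φ`, whose interior is nonempty by
continuity of `φ` at `y`. A separating functional on `Y × ℝ` cannot be vertical, since `C` meets
the vertical line through `y`; normalized, it reads `(y, r) ↦ q y - r`. It touches both sets at
`(f x̄, φ (f x̄))`, which gives `q ∈ ∂φ(f x̄)` and `p ∈ ∂(q ∘ f)(x̄)`. The reverse inclusion is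
the composition of the two subgradient inequalities.
-/

open Set Filter Topology

section Cones

variable {X Y : Type*} [AddCommGroup X] [Module ℝ X] [AddCommGroup Y] [Module ℝ Y]

def Convex.toConvexConeOfSMulMem {s : Set Y} (hs : Convex ℝ s)
    (hsmul : ∀ c : ℝ, 0 < c → ∀ y ∈ s, c • y ∈ s) : ConvexCone ℝ Y where
  carrier := s
  smul_mem' c hc y hy := hsmul c hc y hy
  add_mem' u hu v hv := by
    have half : (0 : ℝ) ≤ 1 / 2 := by norm_num
    simpa [smul_add, smul_smul] using hsmul 2 two_pos _ (hs hu hv half half (by norm_num))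

def ConeConvex (K : ConvexCone ℝ Y) (f : X → Y) : Prop :=
  ∀ x u : X, ∀ l : ℝ, l ∈ Ioo (0 : ℝ) 1 → (l • f x + (1 - l) • f u) - f (l • x + (1 - l) • u) ∈ K

def ConeMonotone (K : ConvexCone ℝ Y) (φ : Y → EReal) : Prop :=
  ∀ y₁ y₂ : Y, y₂ - y₁ ∈ K → φ y₁ ≤ φ y₂

variable {K : ConvexCone ℝ Y} {f : X → Y}

theorem ConeConvex.zero_mem (hf : ConeConvex K f) : (0 : Y) ∈ K := by
  simpa [← add_smul] using hf 0 0 (1 / 2) ⟨by norm_num, by norm_num⟩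

theorem ConeConvex.convex_setOf_exists_sub_mem_le (hf : ConeConvex K f) {h : X → ℝ}
    (hh : ConcaveOn ℝ univ h) : Convex ℝ {z : Y × ℝ | ∃ x, z.1 - f x ∈ K ∧ z.2 ≤ h x} := by
  refine convex_iff_forall_pos.2 ?_
  rintro ⟨y₁, r₁⟩ ⟨x₁, hx₁, hr₁⟩ ⟨y₂, r₂⟩ ⟨x₂, hx₂, hr₂⟩ l m hl hm hlm
  obtain rfl : m = 1 - l := by linarith
  refine ⟨l • x₁ + (1 - l) • x₂, ?_, ?_⟩
  · have hsum := add_mem (add_mem (K.smul_mem hl hx₁) (K.smul_mem hm hx₂))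
      (hf x₁ x₂ l ⟨hl, by linarith⟩)
    convert hsum using 1
    simp only [Prod.smul_mk, Prod.mk_add_mk, smul_sub]
    abel
  · calc l * r₁ + (1 - l) * r₂ ≤ l * h x₁ + (1 - l) * h x₂ := by gcongr
      _ ≤ h (l • x₁ + (1 - l) • x₂) := hh.2 trivial trivial hl.le hm.le hlm

end Cones

section Epigraph

variable {Y : Type*} {φ : Y → EReal}

theorem ConvexE.convex_strictEpigraph [AddCommGroup Y] [Module ℝ Y] (hφ : ConvexE φ) :
    Convex ℝ {z : Y × ℝ | φ z.1 < z.2} := by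
  refine convex_iff_forall_pos.2 ?_
  rintro ⟨y₁, r₁⟩ h₁ ⟨y₂, r₂⟩ h₂ l m hl hm hlm
  obtain ⟨t₁, ht₁, htr₁⟩ := EReal.lt_iff_exists_real_btwn.1 h₁
  obtain ⟨t₂, ht₂, htr₂⟩ := EReal.lt_iff_exists_real_btwn.1 h₂
  have hcomb : φ (l • y₁ + m • y₂) ≤ ((l * t₁ + m * t₂ : ℝ) : EReal) := by
    simpa using hφ (show (y₁, t₁) ∈ {p : Y × ℝ | φ p.1 ≤ p.2} from ht₁.le)
      (show (y₂, t₂) ∈ {p : Y × ℝ | φ p.1 ≤ p.2} from ht₂.le) hl.le hm.le hlm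
  have hlt : l * t₁ + m * t₂ < l * r₁ + m * r₂ := by
    have := EReal.coe_lt_coe_iff.1 htr₁
    have := EReal.coe_lt_coe_iff.1 htr₂
    nlinarith
  exact hcomb.trans_lt (EReal.coe_lt_coe_iff.2 hlt)

variable [TopologicalSpace Y]

theorem epigraph_subset_closure_strictEpigraph :
    {z : Y × ℝ | φ z.1 ≤ z.2} ⊆ closure {z : Y × ℝ | φ z.1 < z.2} := by
  rintro ⟨y, r⟩ (h : φ y ≤ r)
  have hlim : Tendsto (fun t : ℝ => (y, r + t)) (𝓝[>] 0) (𝓝 (y, r)) := by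
    simpa using ((continuous_const.prodMk (continuous_const.add continuous_id)).tendsto
      (0 : ℝ)).mono_left nhdsWithin_le_nhds
  refine mem_closure_of_tendsto hlim (eventually_nhdsWithin_of_forall fun t (ht : 0 < t) => ?_)
  exact h.trans_lt (EReal.coe_lt_coe_iff.2 (lt_add_of_pos_right r ht))

theorem mem_interior_strictEpigraph {y : Y} {r : ℝ} (hφ : ContinuousAt φ y) (hr : φ y < r) :
    (y, r) ∈ interior {z : Y × ℝ | φ z.1 < z.2} :=
  mem_interior_iff_mem_nhds.2 <| (hφ.comp continuousAt_fst).eventually_lt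
    (continuous_coe_real_ereal.comp continuous_snd).continuousAt hr

end Epigraph

section Separation

variable {Y : Type*} [AddCommGroup Y] [Module ℝ Y] [TopologicalSpace Y]

theorem ContinuousLinearMap.apply_prod_real (g : Y × ℝ →L[ℝ] ℝ) (y : Y) (r : ℝ) :
    g (y, r) = g (y, 0) + r * g (0, 1) := by
  rw [← smul_eq_mul, ← map_smul, ← map_add, Prod.smul_mk, smul_zero, smul_eq_mul, mul_one,
    Prod.mk_add_mk, add_zero, zero_add]

theorem ConvexE.exists_nonvertical_separation [IsTopologicalAddGroup Y] [ContinuousSMul ℝ Y]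
    {φ : Y → EReal} (hφ : ConvexE φ) {C : Set (Y × ℝ)} (hC : Convex ℝ C)
    (hCφ : ∀ z ∈ C, (z.2 : EReal) ≤ φ z.1)
    {y₀ : Y} {r₁ : ℝ} (hy₀ : φ y₀ ≠ ⊤) (hφy₀ : ContinuousAt φ y₀) (hr₁ : (y₀, r₁) ∈ C) :
    ∃ (q : Y →L[ℝ] ℝ) (c : ℝ),
      (∀ (y : Y) (r : ℝ), φ y ≤ r → q y - r ≤ c) ∧ ∀ z ∈ C, c ≤ q z.1 - z.2 := by
  set E := {z : Y × ℝ | φ z.1 < z.2}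
  obtain ⟨r₀, hr₀, -⟩ := EReal.lt_iff_exists_real_btwn.1 (Ne.lt_top hy₀)
  have hint : ∀ r : ℝ, r₀ ≤ r → (y₀, r) ∈ interior E := fun r hr =>
    mem_interior_strictEpigraph hφy₀ (hr₀.trans_le (EReal.coe_le_coe_iff.2 hr))
  have hdisj : Disjoint (interior E) C :=
    disjoint_left.2 fun z hzE hzC => (hCφ z hzC).not_gt (interior_subset (s := E) hzE)
  obtain ⟨g, c, hgE, hgC⟩ :=
    geometric_hahn_banach_open hφ.convex_strictEpigraph.interior isOpen_interior hC hdisj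
  have hg_epi : ∀ (y : Y) (r : ℝ), φ y ≤ r → g (y, r) ≤ c := by
    intro y r h
    have hcl : closure (interior E) ⊆ {z | g z ≤ c} :=
      closure_minimal (fun z hz => (hgE z hz).le) (isClosed_le g.continuous continuous_const)
    rw [hφ.convex_strictEpigraph.closure_interior_eq_closure_of_nonempty_interior
      ⟨_, hint r₀ le_rfl⟩] at hcl
    exact hcl (epigraph_subset_closure_strictEpigraph h)
  -- otherwise `g` would be at least `c` at `(y₀, max r₀ r₁)`, above `(y₀, r₁) ∈ C`,
  -- although that point is interior to the epigraph
  have hβ : g (0, 1) < 0 := by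
    by_contra! hβ
    have hE := hgE _ (hint (max r₀ r₁) (le_max_left _ _))
    have hC₁ := hgC _ hr₁
    rw [g.apply_prod_real] at hE hC₁
    nlinarith [le_max_right r₀ r₁]
  have hnorm : ∀ z : Y × ℝ, ((-g (0, 1))⁻¹ • g.comp (.inl ℝ Y ℝ)) z.1 - z.2 = g z / -g (0, 1) := by
    rintro ⟨y, r⟩
    have hβ0 : g (0, 1) ≠ 0 := hβ.ne
    simp only [smul_apply, ContinuousLinearMap.comp_apply,
      ContinuousLinearMap.inl_apply, smul_eq_mul, g.apply_prod_real y r]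
    field_simp
    ring
  refine ⟨(-g (0, 1))⁻¹ • g.comp (.inl ℝ Y ℝ), c / -g (0, 1), ?_, ?_⟩
  · intro y r h
    exact (hnorm (y, r)).trans_le (div_le_div_of_nonneg_right (hg_epi y r h) (by linarith))
  · intro z hz
    exact (div_le_div_of_nonneg_right (hgC z hz) (by linarith)).trans_eq (hnorm z).symm

end Separation

section Subdifferential

variable {X Y : Type*} [AddCommGroup X] [Module ℝ X] [TopologicalSpace X]

theorem mem_subdiffE_coe_iff {g : X → ℝ} {p : X →L[ℝ] ℝ} {xb : X} :
    p ∈ subdiffE (fun x => (g x : EReal)) xb ↔ ∀ x, p (x - xb) ≤ g x - g xb := by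
  simp only [subdiffE, Set.mem_ofPred_eq, ← EReal.coe_sub, EReal.coe_le_coe_iff]

theorem mem_subdiffE_of_forall_sub_le {φ : X → EReal} (hφ : ∀ x, φ x ≠ ⊥) {p : X →L[ℝ] ℝ}
    {xb : X} {a : ℝ} (ha : φ xb = a) (h : ∀ (x : X) (r : ℝ), φ x ≤ r → p x - r ≤ p xb - a) :
    p ∈ subdiffE φ xb := by
  intro x
  rw [ha]
  induction hx : φ x with
  | bot => exact absurd hx (hφ x)
  | top => simp
  | coe t =>
    rw [map_sub, ← EReal.coe_sub, EReal.coe_le_coe_iff]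
    linarith [h x t hx.le]

variable [AddCommGroup Y] [Module ℝ Y] [TopologicalSpace Y]

theorem subdiffE_coe_comp_subset {f : X → Y} {φ : Y → EReal} {xb : X} {q : Y →L[ℝ] ℝ}
    (hq : q ∈ subdiffE φ (f xb)) :
    subdiffE (fun x => ((q (f x) : ℝ) : EReal)) xb ⊆ subdiffE (fun x => φ (f x)) xb :=
  fun p hp x => (hp x).trans (by simpa only [map_sub, EReal.coe_sub] using hq (f x))

theorem subdiffE_comp_subset_iUnion [IsTopologicalAddGroup Y] [ContinuousSMul ℝ Y]
    {K : ConvexCone ℝ Y} {f : X → Y} {φ : Y → EReal} (hf : ConeConvex K f) (hφ : ConvexE φ)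
    (hφbot : ∀ y, φ y ≠ ⊥) (hφmono : ConeMonotone K φ)
    (hcont : ∃ (x : X) (y : Y), y - f x ∈ K ∧ φ y ≠ ⊤ ∧ ContinuousAt φ y) {xb : X}
    (hxb : φ (f xb) ≠ ⊤) :
    subdiffE (fun x => φ (f x)) xb ⊆
      ⋃ q ∈ subdiffE φ (f xb), subdiffE (fun x => ((q (f x) : ℝ) : EReal)) xb := by
  intro p hp
  obtain ⟨xs, ys, hys, hysT, hysC⟩ := hcont
  obtain ⟨a, ha⟩ : ∃ a : ℝ, φ (f xb) = a := ⟨_, (EReal.coe_toReal hxb (hφbot _)).symm⟩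
  set C := {z : Y × ℝ | ∃ x, z.1 - f x ∈ K ∧ z.2 ≤ a + p (x - xb)}
  have hC : Convex ℝ C := hf.convex_setOf_exists_sub_mem_le <| by
    refine ((p.toLinearMap.concaveOn convex_univ).add_const (a - p xb)).congr fun x _ => ?_
    simp only [map_sub, Pi.add_apply, ContinuousLinearMap.coe_coe]
    ring
  have hCφ : ∀ z ∈ C, (z.2 : EReal) ≤ φ z.1 := by
    rintro ⟨y, r⟩ ⟨x, hx, hr⟩
    have hpx : ((p (x - xb) : ℝ) : EReal) + a ≤ φ (f x) := by
      rw [← EReal.le_sub_iff_add_le (by simp) (by simp), ← ha]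
      exact hp x
    calc (r : EReal) ≤ ((p (x - xb) : ℝ) : EReal) + a := by exact_mod_cast (by linarith)
      _ ≤ φ (f x) := hpx
      _ ≤ φ y := hφmono _ _ hx
  have hfC : ∀ x, (f x, a + p (x - xb)) ∈ C := fun x => ⟨x, by simpa using hf.zero_mem, le_rfl⟩
  obtain ⟨q, c, hq_epi, hqC⟩ :=
    hφ.exists_nonvertical_separation hC hCφ hysT hysC (r₁ := a + p (xs - xb)) ⟨xs, hys, le_rfl⟩
  have hc : c = q (f xb) - a :=
    le_antisymm (by simpa using hqC _ (hfC xb)) (hq_epi _ _ ha.le)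
  refine mem_iUnion₂.2 ⟨q, mem_subdiffE_of_forall_sub_le hφbot ha (hc ▸ hq_epi), ?_⟩
  refine mem_subdiffE_coe_iff.2 fun x => ?_
  have := hqC _ (hfC x)
  simp only at this
  linarith

end Subdifferential

theorem chain_rule_ordered_composition_general
    {X Y : Type*} [AddCommGroup X] [Module ℝ X] [TopologicalSpace X]
    [AddCommGroup Y] [Module ℝ Y] [TopologicalSpace Y]
    [IsTopologicalAddGroup Y] [ContinuousSMul ℝ Y]
    (Yp : Set Y) (hYpconv : Convex ℝ Yp)
    (hYpcone : ∀ (c : ℝ), 0 < c → ∀ y ∈ Yp, c • y ∈ Yp)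
    (f : X → Y)
    (hfconv : ∀ x u : X, ∀ l : ℝ, l ∈ Set.Ioo (0 : ℝ) 1 →
      (l • f x + (1 - l) • f u) - f (l • x + (1 - l) • u) ∈ Yp)
    (φ : Y → EReal) (hφconv : ConvexE φ) (hφbot : ∀ y, φ y ≠ ⊥)
    (hφmono : ∀ y₁ y₂ : Y, y₂ - y₁ ∈ Yp → φ y₁ ≤ φ y₂)
    (hcont : ∃ (x : X) (y : Y), y - f x ∈ Yp ∧ φ y ≠ ⊤ ∧ ContinuousAt φ y) :
    ∀ xb : X, φ (f xb) ≠ ⊤ →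
      subdiffE (fun x => φ (f x)) xb
        = ⋃ q ∈ subdiffE φ (f xb),
            subdiffE (fun x => ((q (f x) : ℝ) : EReal)) xb := by
  intro xb hxb
  let K := hYpconv.toConvexConeOfSMulMem hYpcone
  refine (subdiffE_comp_subset_iUnion (K := K) hfconv hφconv hφbot hφmono hcont hxb).antisymm ?_
  exact iUnion₂_subset fun q hq => subdiffE_coe_comp_subset hq

/-- chain rule for nondecreasing compositions in ordered spaces: if
`Y₊ ⊂ Y` is a convex cone, `f : X → Y` is `Y₊`-convex, `φ : Y → (-∞,∞]` is convex and
`Y₊`-nondecreasing, and `φ` is finite and continuous at some `y` with `f(x) ≺ y`, then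
`∂(φ ∘ f)(x̄) = ⋃_{y* ∈ ∂φ(f(x̄))} ∂(y* ∘ f)(x̄)` for all `x̄ ∈ dom (φ ∘ f)`. -/
theorem chain_rule_ordered_composition
    {X Y : Type*} [AddCommGroup X] [Module ℝ X] [TopologicalSpace X]
    [IsTopologicalAddGroup X] [ContinuousSMul ℝ X] [LocallyConvexSpace ℝ X] [T2Space X]
    [AddCommGroup Y] [Module ℝ Y] [TopologicalSpace Y]
    [IsTopologicalAddGroup Y] [ContinuousSMul ℝ Y] [LocallyConvexSpace ℝ Y] [T2Space Y]
    (Yp : Set Y) (hYpconv : Convex ℝ Yp)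
    (hYpcone : ∀ (c : ℝ), 0 < c → ∀ y ∈ Yp, c • y ∈ Yp)
    (f : X → Y)
    (hfconv : ∀ x u : X, ∀ l : ℝ, l ∈ Set.Ioo (0 : ℝ) 1 →
      (l • f x + (1 - l) • f u) - f (l • x + (1 - l) • u) ∈ Yp)
    (φ : Y → EReal) (hφconv : ConvexE φ) (hφbot : ∀ y, φ y ≠ ⊥)
    (hφmono : ∀ y₁ y₂ : Y, y₂ - y₁ ∈ Yp → φ y₁ ≤ φ y₂)
    (hcont : ∃ (x : X) (y : Y), y - f x ∈ Yp ∧ φ y ≠ ⊤ ∧ ContinuousAt φ y) :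
    ∀ xb : X, φ (f xb) ≠ ⊤ →
      subdiffE (fun x => φ (f x)) xb
        = ⋃ q ∈ subdiffE φ (f xb),
            subdiffE (fun x => ((q (f x) : ℝ) : EReal)) xb :=
  chain_rule_ordered_composition_general Yp hYpconv hYpcone f hfconv φ hφconv hφbot hφmono hcont
end

section
/- Let X and Y be separated locally convex topological vector spaces over the reals and let F₁, F₂ : X ⇉ Y be set-valued mappings with convex graphs. Assume that (i) int(gph F₁) ∩ gph F₂ ≠ ∅, or (ii) X and Y are Banach spaces, F₁ and F₂ have closed graphs, and ℝ⁺(gph F₁ − gph F₂) is a closed linear subspace of X × Y. Then for any x̄, any ȳ ∈ F₁(x̄) ∩ F₂(x̄), and any y* ∈ Y*: D*(F₁ ∩ F₂)(x̄,ȳ)(y*) = ⋃_{y*₁ + y*₂ = y*} (D*F₁(x̄,ȳ)(y*₁) + D*F₂(x̄,ȳ)(y*₂)). -/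
open Pointwise

/-- Graph of a set-valued mapping. -/
def gphF {X Y : Type*} (F : X → Set Y) : Set (X × Y) := {p | p.2 ∈ F p.1}

/-- Coderivative of a convex-graph set-valued mapping `F` at `(xb, yb) ∈ gph F`. -/
def coderivF {X Y : Type*} [AddCommGroup X] [Module ℝ X] [TopologicalSpace X]
    [AddCommGroup Y] [Module ℝ Y] [TopologicalSpace Y]
    (F : X → Set Y) (xb : X) (yb : Y) (q : Y →L[ℝ] ℝ) : Set (X →L[ℝ] ℝ) :=
  {p | ∀ x : X, ∀ y ∈ F x, p (x - xb) - q (y - yb) ≤ 0}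

/-! The coderivative inequality `p (x - x̄) - q (y - ȳ) ≤ 0` on `gph F` says that `(p, -q)` is
normal to `gph F` at `(x̄, ȳ)`, so the rule is the normal cone intersection rule
`N(z̄; Ω₁ ∩ Ω₂) = N(z̄; Ω₁) + N(z̄; Ω₂)` for `Ωᵢ = gph Fᵢ`, whose inclusion `⊇` is immediate.

Under (i), a functional `g` normal to `Ω₁ ∩ Ω₂` is split by separating the hypograph
`{(z, t) | z ∈ Ω₁, t ≤ g (z - z̄)}`, whose interior is nonempty, from `Ω₂ × [0, ∞)`.

Under (ii), translate `z̄` to `0` and restrict to the closed subspace `L`, a Banach space in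
which `A - B` is absorbing (`A`, `B` the translated graphs). Baire's theorem and a
successive approximation argument (as in the Robinson–Ursescu theorem) show that `0` is an
interior point of `(A ∩ 𝔹) - (B ∩ 𝔹)`, `𝔹` the closed unit ball. The set
`{(a - b, t) | a ∈ A ∩ 𝔹, b ∈ B ∩ 𝔹, t ≤ g b}` then has interior points on the axis `0 × ℝ` and
meets it only where `t ≤ 0`; the interior case, applied to this set, the axis and `(w, t) ↦ t`,
splits `g` on `L`, and Hahn–Banach extends the pieces to `X × Y`. -/

universe u

open Set Filter Topology

def normalCone {E : Type*} [AddCommGroup E] [Module ℝ E] [TopologicalSpace E]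
    (Ω : Set E) (z : E) : Set (E →L[ℝ] ℝ) :=
  {g | ∀ w ∈ Ω, g (w - z) ≤ 0}

section NormalCone

variable {E : Type*} [AddCommGroup E] [Module ℝ E] [TopologicalSpace E]

theorem mem_normalCone {Ω : Set E} {z : E} {g : E →L[ℝ] ℝ} :
    g ∈ normalCone Ω z ↔ ∀ w ∈ Ω, g (w - z) ≤ 0 :=
  Iff.rfl

theorem normalCone_anti {Ω Ω' : Set E} (h : Ω ⊆ Ω') (z : E) :
    normalCone Ω' z ⊆ normalCone Ω z :=
  fun _ hg w hw => hg w (h hw)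

theorem mem_normalCone_iff_comp_subtypeL {L : Submodule ℝ E} {Ω : Set E} {z : E}
    (hΩ : ∀ w ∈ Ω, w - z ∈ L) {g : E →L[ℝ] ℝ} :
    g ∈ normalCone Ω z ↔ g.comp L.subtypeL ∈ normalCone ((fun w : L => z + (w : E)) ⁻¹' Ω) 0 := by
  constructor
  · intro hg w hw
    simpa using hg _ hw
  · intro hg w hw
    simpa using hg ⟨w - z, hΩ w hw⟩ (by simpa using hw)

end NormalCone

section Coderivative

variable {X Y : Type*} [AddCommGroup X] [Module ℝ X] [TopologicalSpace X]
  [AddCommGroup Y] [Module ℝ Y] [TopologicalSpace Y]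

theorem mem_coderivF_iff {F : X → Set Y} {xb : X} {yb : Y} {p : X →L[ℝ] ℝ}
    {q : Y →L[ℝ] ℝ} :
    p ∈ coderivF F xb yb q ↔ p.coprod (-q) ∈ normalCone (gphF F) (xb, yb) := by
  simp only [coderivF, normalCone, gphF, Set.mem_ofPred_eq, Prod.forall]
  refine forall_congr' fun x => forall₂_congr fun y _ => ?_
  simp [sub_eq_add_neg]

theorem comp_inl_mem_coderivF_of_mem_normalCone {F : X → Set Y} {xb : X} {yb : Y}
    {g : X × Y →L[ℝ] ℝ} (hg : g ∈ normalCone (gphF F) (xb, yb)) :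
    g.comp (.inl ℝ X Y) ∈ coderivF F xb yb (-g.comp (.inr ℝ X Y)) := by
  intro x y hy
  have := hg (x, y) hy
  rw [← g.comp_inl_add_comp_inr] at this
  simpa [sub_eq_add_neg] using this

theorem coderivF_inter_eq_of_normalCone_inter_subset {F₁ F₂ : X → Set Y} {xb : X} {yb : Y}
    (h : normalCone (gphF F₁ ∩ gphF F₂) (xb, yb)
      ⊆ normalCone (gphF F₁) (xb, yb) + normalCone (gphF F₂) (xb, yb)) (q : Y →L[ℝ] ℝ) :
    coderivF (fun x => F₁ x ∩ F₂ x) xb yb q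
      = ⋃ (q₁ : Y →L[ℝ] ℝ) (q₂ : Y →L[ℝ] ℝ) (_ : q₁ + q₂ = q),
          coderivF F₁ xb yb q₁ + coderivF F₂ xb yb q₂ := by
  ext p
  simp only [mem_iUnion]
  constructor
  · intro hp
    obtain ⟨g₁, hg₁, g₂, hg₂, hg⟩ := h (mem_coderivF_iff.1 hp)
    refine ⟨_, _, ?_, _, comp_inl_mem_coderivF_of_mem_normalCone hg₁, _,
      comp_inl_mem_coderivF_of_mem_normalCone hg₂, ?_⟩
    · ext y
      have := congrArg (· (0, y)) hg
      simp only [add_apply, ContinuousLinearMap.coprod_apply, map_zero, neg_apply, zero_add,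
        ContinuousLinearMap.comp_apply, ContinuousLinearMap.inr_apply] at this ⊢
      linarith
    · ext x
      simpa using congrArg (· (x, 0)) hg
  · rintro ⟨q₁, q₂, rfl, p₁, hp₁, p₂, hp₂, rfl⟩ x y ⟨hy₁, hy₂⟩
    have h₁ := hp₁ x y hy₁
    have h₂ := hp₂ x y hy₂
    simp only [add_apply]
    linarith

end Coderivative

theorem exists_gt_mem_of_mem_interior {α : Type*} [TopologicalSpace α] {Θ : Set (α × ℝ)}
    {z : α} {t : ℝ} (h : (z, t) ∈ interior Θ) : ∃ t' > t, (z, t') ∈ Θ := by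
  have hnhds : ∀ᶠ t' in 𝓝[>] t, (z, t') ∈ Θ :=
    ((Continuous.prodMk_right z).tendsto t).mono_left nhdsWithin_le_nhds
      |>.eventually (mem_interior_iff_mem_nhds.1 h)
  obtain ⟨t', hΘ, ht'⟩ := (hnhds.and self_mem_nhdsWithin).exists
  exact ⟨t', ht', hΘ⟩

section InteriorPoint

variable {E : Type*} [AddCommGroup E] [Module ℝ E] [TopologicalSpace E]
  [IsTopologicalAddGroup E] [ContinuousSMul ℝ E]

theorem exists_separation_of_disjoint_interior {Θ T : Set E} (hΘ : Convex ℝ Θ)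
    (hne : (interior Θ).Nonempty) (hT : Convex ℝ T) (hdisj : Disjoint (interior Θ) T) :
    ∃ (f : E →L[ℝ] ℝ) (u : ℝ),
      (∀ p ∈ interior Θ, f p < u) ∧ (∀ p ∈ Θ, f p ≤ u) ∧ ∀ p ∈ T, u ≤ f p := by
  obtain ⟨f, u, hlt, hge⟩ := geometric_hahn_banach_open hΘ.interior isOpen_interior hT hdisj
  have hclosure : closure (interior Θ) ⊆ {p | f p ≤ u} :=
    closure_minimal (fun p hp => (hlt p hp).le) (isClosed_le f.continuous continuous_const)
  refine ⟨f, u, hlt, fun p hp => ?_, hge⟩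
  rw [hΘ.closure_interior_eq_closure_of_nonempty_interior hne] at hclosure
  exact hclosure (subset_closure hp)

theorem exists_separation_of_mem_normalCone_inter {Ω₁ Ω₂ : Set E} (h₁ : Convex ℝ Ω₁)
    (h₂ : Convex ℝ Ω₂) (hint : (interior Ω₁ ∩ Ω₂).Nonempty) {zb : E} (hzb : zb ∈ Ω₁ ∩ Ω₂)
    {g : E →L[ℝ] ℝ} (hg : g ∈ normalCone (Ω₁ ∩ Ω₂) zb) :
    ∃ (k : E →L[ℝ] ℝ) (s : ℝ), 0 < s ∧ (∀ z ∈ Ω₁, k (z - zb) + g (z - zb) * s ≤ 0) ∧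
      ∀ z ∈ Ω₂, 0 ≤ k (z - zb) := by
  obtain ⟨z₀, hz₀, hz₀₂⟩ := hint
  set Θ : Set (E × ℝ) := {p | p.1 ∈ Ω₁ ∧ p.2 ≤ g (p.1 - zb)}
  have hΘ : Convex ℝ Θ := by
    convert (((g : E →ₗ[ℝ] ℝ).concaveOn h₁).add_const (-g zb)).convex_hypograph using 4
    simp [sub_eq_add_neg]
  have hΘint : ∀ z ∈ interior Ω₁, ∀ t < g (z - zb), (z, t) ∈ interior Θ := by
    have hopen : IsOpen {p : E × ℝ | p.1 ∈ interior Ω₁ ∧ p.2 < g (p.1 - zb)} :=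
      (isOpen_interior.preimage continuous_fst).inter
        (isOpen_lt continuous_snd (g.continuous.comp (continuous_fst.sub continuous_const)))
    intro z hz t ht
    refine interior_maximal ?_ hopen ⟨hz, ht⟩
    exact fun p hp => ⟨interior_subset hp.1, hp.2.le⟩
  have hdisj : Disjoint (interior Θ) (Ω₂ ×ˢ Ici 0) := by
    refine Set.disjoint_left.2 ?_
    rintro ⟨z, t⟩ hzt ⟨hz₂, ht⟩
    obtain ⟨t', htt', hz₁, hle⟩ := exists_gt_mem_of_mem_interior hzt
    linarith [hg z ⟨hz₁, hz₂⟩, mem_Ici.1 ht]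
  obtain ⟨f, u, hlt, hle, hge⟩ := exists_separation_of_disjoint_interior hΘ
    ⟨_, hΘint z₀ hz₀ _ (sub_one_lt _)⟩ (h₂.prod (convex_Ici 0)) hdisj
  set k : E →L[ℝ] ℝ := f.comp (.inl ℝ E ℝ)
  set s : ℝ := f (0, 1)
  have hf : ∀ z t, f (z, t) = k z + t * s := fun z t => by
    have hzt : ((z, t) : E × ℝ) = (z, 0) + t • (0, 1) := by simp
    rw [hzt, map_add, map_smul, smul_eq_mul]
    rfl
  have hk₁ : ∀ z ∈ Ω₁, k z + g (z - zb) * s ≤ u := fun z hz => hf z _ ▸ hle _ ⟨hz, le_rfl⟩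
  have hk₂ : ∀ z ∈ Ω₂, u ≤ k z := fun z hz => by simpa [hf] using hge (z, 0) ⟨hz, self_mem_Ici⟩
  have hu : u = k zb := le_antisymm (hk₂ zb hzb.2) (by simpa using hk₁ zb hzb.1)
  have hs : 0 < s := by
    set t₀ := min (g (z₀ - zb)) 0 - 1
    have ht₀ : t₀ < 0 := by linarith [min_le_right (g (z₀ - zb)) 0]
    have := hf z₀ t₀ ▸ hlt _ (hΘint z₀ hz₀ t₀ (by linarith [min_le_left (g (z₀ - zb)) 0]))
    nlinarith [hk₂ z₀ hz₀₂]
  refine ⟨k, s, hs, fun z hz => ?_, fun z hz => ?_⟩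
  · linarith [map_sub k z zb, hk₁ z hz]
  · linarith [map_sub k z zb, hk₂ z hz]

theorem normalCone_inter_subset_add_of_interior {Ω₁ Ω₂ : Set E} (h₁ : Convex ℝ Ω₁)
    (h₂ : Convex ℝ Ω₂) (hint : (interior Ω₁ ∩ Ω₂).Nonempty) {zb : E} (hzb : zb ∈ Ω₁ ∩ Ω₂) :
    normalCone (Ω₁ ∩ Ω₂) zb ⊆ normalCone Ω₁ zb + normalCone Ω₂ zb := by
  intro g hg
  obtain ⟨k, s, hs, hk₁, hk₂⟩ := exists_separation_of_mem_normalCone_inter h₁ h₂ hint hzb hg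
  refine ⟨g + s⁻¹ • k, fun z hz => ?_, -(s⁻¹ • k), fun z hz => ?_, add_neg_cancel_right _ _⟩
  · calc (g + s⁻¹ • k) (z - zb) = s⁻¹ * (k (z - zb) + g (z - zb) * s) := by
          simp only [add_apply, smul_apply, smul_eq_mul]
          field_simp
          ring
      _ ≤ 0 := mul_nonpos_of_nonneg_of_nonpos (inv_nonneg.2 hs.le) (hk₁ z hz)
  · simpa using mul_nonneg (inv_nonneg.2 hs.le) (hk₂ z hz)

end InteriorPoint

theorem Convex.sum_half_pow_smul_add_mem {E : Type*} [AddCommGroup E] [Module ℝ E] {K : Set E}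
    (hK : Convex ℝ K) (n : ℕ) :
    ∀ t : ℕ → E, (∀ j, t j ∈ K) → ∀ x ∈ K,
      ∑ j ∈ Finset.range n, (2⁻¹ : ℝ) ^ (j + 1) • t j + (2⁻¹ : ℝ) ^ n • x ∈ K := by
  induction n with
  | zero => simp
  | succ n ih =>
    intro t ht x hx
    convert hK (ht 0) (ih (fun j => t (j + 1)) (fun j => ht _) x hx)
      (by norm_num : (0 : ℝ) ≤ 2⁻¹) (by norm_num : (0 : ℝ) ≤ 2⁻¹) (by norm_num) using 1
    simp only [Finset.sum_range_succ', smul_add, Finset.smul_sum, smul_smul, ← pow_succ',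
      zero_add, pow_one]
    abel

section TopologicalVectorSpace

variable {E : Type*} [AddCommGroup E] [Module ℝ E] [TopologicalSpace E]
  [IsTopologicalAddGroup E] [ContinuousSMul ℝ E]

theorem IsClosed.mem_of_tendsto_sum_half_pow_smul {K : Set E} (hKc : IsClosed K)
    (hK : Convex ℝ K) {t : ℕ → E} (ht : ∀ j, t j ∈ K) {w : E}
    (hw : Tendsto (fun n => ∑ j ∈ Finset.range n, (2⁻¹ : ℝ) ^ (j + 1) • t j) atTop (𝓝 w)) :
    w ∈ K := by
  have hlim := hw.add ((tendsto_pow_atTop_nhds_zero_of_lt_one (by norm_num : (0 : ℝ) ≤ 2⁻¹)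
    (by norm_num)).smul_const (t 0))
  rw [zero_smul, add_zero] at hlim
  exact hKc.mem_of_tendsto hlim (Eventually.of_forall fun n =>
    hK.sum_half_pow_smul_add_mem n t ht (t 0) (ht 0))

theorem closure_mem_nhds_zero_of_forall_mem_smul [BaireSpace E] {S : Set E} (hS : Convex ℝ S)
    (h0 : 0 ∈ S) (habs : ∀ x, ∃ r : ℝ, 0 < r ∧ x ∈ r • S) : closure S ∈ 𝓝 0 := by
  have hcover : ⋃ n : ℕ, closure (((n : ℝ) + 1) • S) = univ := by
    refine eq_univ_of_forall fun x => ?_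
    obtain ⟨r, hr, y, hy, rfl⟩ := habs x
    obtain ⟨n, hn⟩ := exists_nat_ge r
    have hy' : y ∈ (((n : ℝ) + 1) / r) • S :=
      hS.mem_smul_of_zero_mem h0 hy ((one_le_div hr).2 (by linarith))
    refine mem_iUnion.2 ⟨n, subset_closure ?_⟩
    rw [show (n : ℝ) + 1 = r * (((n : ℝ) + 1) / r) by field_simp, mul_smul]
    exact smul_mem_smul_set hy'
  have : Nonempty E := ⟨0⟩
  obtain ⟨n, x₀, hx₀⟩ := nonempty_interior_of_iUnion_of_closed (fun _ => isClosed_closure) hcover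
  rw [closure_smul₀' (by positivity), interior_smul₀ (by positivity)] at hx₀
  obtain ⟨y₀, hy₀, -⟩ := hx₀
  obtain ⟨r, hr, s₀, hs₀, hrs⟩ := habs (-y₀)
  -- `0` is a convex combination of the interior point `y₀` and of `s₀ = -r⁻¹ • y₀`
  have h0int := hS.closure.combo_interior_self_mem_interior hy₀ (subset_closure hs₀)
    (by positivity : (0 : ℝ) < 1 / (1 + r)) (by positivity : (0 : ℝ) ≤ r / (1 + r))
    (by field_simp)
  have hrs : r • s₀ = -y₀ := hrs
  rw [div_eq_inv_mul, div_eq_inv_mul, mul_smul, mul_smul, ← smul_add, one_smul, hrs,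
    add_neg_cancel, smul_zero] at h0int
  exact mem_interior_iff_mem_nhds.1 h0int

end TopologicalVectorSpace

section NormedSpace

variable {W : Type*} [NormedAddCommGroup W] [NormedSpace ℝ W]

theorem exists_tendsto_sum_half_pow_smul {T : Set W} {ρ : ℝ}
    (hρ : Metric.ball 0 ρ ⊆ closure T) {w : W} (hw : ‖w‖ < ρ / 2) :
    ∃ t : ℕ → W, (∀ j, t j ∈ T) ∧
      Tendsto (fun n => ∑ j ∈ Finset.range n, (2⁻¹ : ℝ) ^ (j + 1) • t j) atTop (𝓝 w) := by
  have hρpos : 0 < ρ := by linarith [norm_nonneg w]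
  obtain ⟨y₀, hy₀⟩ := closure_nonempty_iff.1 ⟨0, hρ (Metric.mem_ball_self hρpos)⟩
  have happrox : ∀ x : W, ∃ y ∈ T, ‖x‖ < ρ → ‖x - y‖ < ρ / 2 := by
    intro x
    by_cases hx : ‖x‖ < ρ
    · obtain ⟨y, hyT, hxy⟩ :=
        Metric.mem_closure_iff.1 (hρ (mem_ball_zero_iff.2 hx)) (ρ / 2) (half_pos hρpos)
      exact ⟨y, hyT, fun _ => by rwa [← dist_eq_norm]⟩
    · exact ⟨y₀, hy₀, fun h => absurd h hx⟩
  choose τ hτT hτ using happrox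
  -- `s k = 2 ^ (k + 1) • (w - ∑ j < k, 2⁻¹ ^ (j + 1) • τ (s j))` is the rescaled residual
  set s : ℕ → W := fun k => (fun x => (2 : ℝ) • (x - τ x))^[k] ((2 : ℝ) • w)
  have hs_succ : ∀ k, s (k + 1) = (2 : ℝ) • (s k - τ (s k)) := fun k =>
    Function.iterate_succ_apply' _ _ _
  have hs : ∀ k, ‖s k‖ < ρ := by
    intro k
    induction k with
    | zero => simp [s, norm_smul]; linarith
    | succ k ih => simp [hs_succ, norm_smul]; linarith [hτ _ ih]
  have hsum : ∀ n, ∑ j ∈ Finset.range n, (2⁻¹ : ℝ) ^ (j + 1) • τ (s j)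
      = w - (2⁻¹ : ℝ) ^ (n + 1) • s n := by
    intro n
    induction n with
    | zero => simp [s, smul_smul]
    | succ n ih =>
      rw [Finset.sum_range_succ, ih, hs_succ, smul_smul, pow_succ]
      module
  have hgeom : Tendsto (fun n : ℕ => (2⁻¹ : ℝ) ^ (n + 1) * ρ) atTop (𝓝 0) := by
    simpa using ((tendsto_pow_atTop_nhds_zero_of_lt_one (by norm_num : (0 : ℝ) ≤ 2⁻¹)
      (by norm_num)).comp (tendsto_add_atTop_nat 1)).mul_const ρ
  have hrem : Tendsto (fun n => (2⁻¹ : ℝ) ^ (n + 1) • s n) atTop (𝓝 0) := by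
    refine squeeze_zero_norm (fun n => ?_) hgeom
    rw [norm_smul, Real.norm_of_nonneg (by positivity)]
    exact mul_le_mul_of_nonneg_left (hs n).le (by positivity)
  have hlim := (tendsto_const_nhds (x := w)).sub hrem
  rw [sub_zero] at hlim
  exact ⟨fun j => τ (s j), fun j => hτT _, hlim.congr fun n => (hsum n).symm⟩

theorem mem_sub_of_tendsto_sum_half_pow_smul [CompleteSpace W] {K₁ K₂ : Set W}
    (hK₁c : IsClosed K₁) (hK₁ : Convex ℝ K₁) (hK₁b : Bornology.IsBounded K₁)
    (hK₂c : IsClosed K₂) (hK₂ : Convex ℝ K₂) {t : ℕ → W} (ht : ∀ j, t j ∈ K₁ - K₂) {w : W}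
    (hw : Tendsto (fun n => ∑ j ∈ Finset.range n, (2⁻¹ : ℝ) ^ (j + 1) • t j) atTop (𝓝 w)) :
    w ∈ K₁ - K₂ := by
  choose a ha b hb hab using ht
  obtain ⟨C, hC⟩ := hK₁b.exists_norm_le
  have hsummable : Summable fun j => (2⁻¹ : ℝ) ^ (j + 1) • a j := by
    refine Summable.of_norm_bounded (((summable_nat_add_iff 1).2
      (summable_geometric_of_lt_one (by norm_num : (0 : ℝ) ≤ 2⁻¹) (by norm_num))).mul_left C)
      fun j => ?_
    rw [norm_smul, Real.norm_of_nonneg (by positivity), mul_comm]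
    exact mul_le_mul_of_nonneg_right (hC _ (ha j)) (by positivity)
  have hα := hsummable.hasSum.tendsto_sum_nat
  have hβ : Tendsto (fun n => ∑ j ∈ Finset.range n, (2⁻¹ : ℝ) ^ (j + 1) • b j) atTop
      (𝓝 (∑' j, (2⁻¹ : ℝ) ^ (j + 1) • a j - w)) := by
    refine (hα.sub hw).congr fun n => ?_
    simp only [← Finset.sum_sub_distrib, ← smul_sub, ← hab, sub_sub_cancel]
  exact ⟨_, hK₁c.mem_of_tendsto_sum_half_pow_smul hK₁ ha hα,
    _, hK₂c.mem_of_tendsto_sum_half_pow_smul hK₂ hb hβ, sub_sub_cancel _ _⟩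

theorem Convex.inv_smul_mem_inter_closedBall {A : Set W} (hA : Convex ℝ A) (h0 : 0 ∈ A)
    {a : W} (ha : a ∈ A) {c : ℝ} (hc : 1 ≤ c) (hac : ‖a‖ ≤ c) :
    c⁻¹ • a ∈ A ∩ Metric.closedBall 0 1 := by
  have hcpos : 0 < c := one_pos.trans_le hc
  refine ⟨hA.smul_mem_of_zero_mem h0 ha ⟨by positivity, inv_le_one_of_one_le₀ hc⟩, ?_⟩
  rw [mem_closedBall_zero_iff, norm_smul, Real.norm_of_nonneg (by positivity)]
  exact inv_mul_le_one_of_le₀ hac hcpos.le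

theorem exists_ball_subset_of_posSpan_sub_eq_univ [CompleteSpace W] {A B : Set W}
    (hA : Convex ℝ A) (hB : Convex ℝ B) (hAc : IsClosed A) (hBc : IsClosed B)
    (h0A : 0 ∈ A) (h0B : 0 ∈ B) (hspan : posSpan (A - B) = univ) :
    ∃ ρ > 0, Metric.ball 0 ρ ⊆ A ∩ Metric.closedBall 0 1 - B ∩ Metric.closedBall 0 1 := by
  set S := A ∩ Metric.closedBall (0 : W) 1 - B ∩ Metric.closedBall 0 1
  have hS : Convex ℝ S :=
    (hA.inter (convex_closedBall 0 1)).sub (hB.inter (convex_closedBall 0 1))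
  have h0S : (0 : W) ∈ S :=
    ⟨0, ⟨h0A, Metric.mem_closedBall_self zero_le_one⟩, 0,
      ⟨h0B, Metric.mem_closedBall_self zero_le_one⟩, sub_zero 0⟩
  have habs : ∀ x, ∃ r : ℝ, 0 < r ∧ x ∈ r • S := by
    intro x
    obtain ⟨t, ht, _, ⟨a, ha, b, hb, rfl⟩, rfl⟩ : x ∈ posSpan (A - B) := hspan ▸ mem_univ x
    set c := max (max ‖a‖ ‖b‖) 1
    have hc : 0 < c := lt_max_of_lt_right one_pos
    refine ⟨t * c, mul_pos ht hc, c⁻¹ • a - c⁻¹ • b,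
      sub_mem_sub (hA.inv_smul_mem_inter_closedBall h0A ha (le_max_right _ _)
        ((le_max_left _ _).trans (le_max_left _ _)))
      (hB.inv_smul_mem_inter_closedBall h0B hb (le_max_right _ _)
        ((le_max_right _ _).trans (le_max_left _ _))), ?_⟩
    simp only [← smul_sub, smul_smul, mul_assoc, mul_inv_cancel₀ hc.ne', mul_one]
  obtain ⟨ρ, hρ, hball⟩ :=
    Metric.mem_nhds_iff.1 (closure_mem_nhds_zero_of_forall_mem_smul hS h0S habs)
  refine ⟨ρ / 2, half_pos hρ, fun w hw => ?_⟩
  obtain ⟨t, ht, hlim⟩ := exists_tendsto_sum_half_pow_smul hball (mem_ball_zero_iff.1 hw)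
  exact mem_sub_of_tendsto_sum_half_pow_smul (hAc.inter Metric.isClosed_closedBall)
    (hA.inter (convex_closedBall 0 1)) (Metric.isBounded_closedBall.subset inter_subset_right)
    (hBc.inter Metric.isClosed_closedBall) (hB.inter (convex_closedBall 0 1)) ht hlim

theorem normalCone_inter_closedBall {A : Set W} (hA : Convex ℝ A) {z : W} (hz : z ∈ A) {r : ℝ}
    (hr : 0 < r) : normalCone (A ∩ Metric.closedBall z r) z = normalCone A z := by
  refine subset_antisymm (fun g hg a ha => ?_) (normalCone_anti inter_subset_left z)
  have hd : 0 < r + ‖a - z‖ := by positivity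
  set c := r / (r + ‖a - z‖)
  have hc : 0 < c := div_pos hr hd
  have hmem : z + c • (a - z) ∈ A ∩ Metric.closedBall z r := by
    refine ⟨hA.add_smul_sub_mem hz ha
      ⟨hc.le, (div_le_one hd).2 (by linarith [norm_nonneg (a - z)])⟩, ?_⟩
    rw [Metric.mem_closedBall, dist_eq_norm, add_sub_cancel_left, norm_smul,
      Real.norm_of_nonneg hc.le, div_mul_eq_mul_div, div_le_iff₀ hd]
    nlinarith [norm_nonneg (a - z)]
  have := hg _ hmem
  rw [add_sub_cancel_left, map_smul, smul_eq_mul] at this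
  exact nonpos_of_mul_nonpos_right this hc

theorem apply_eq_of_mem_normalCone_axis {G : W × ℝ →L[ℝ] ℝ}
    (hG : G ∈ normalCone ({0} ×ˢ univ) 0) (w : W) (t : ℝ) : G (w, t) = G (w, 0) := by
  have hpos := hG (0, t) ⟨rfl, trivial⟩
  have hneg := hG (-(0, t)) ⟨by simp, trivial⟩
  simp only [sub_zero, map_neg, neg_nonpos] at hpos hneg
  rw [← G.comp_inl_add_comp_inr (w, t)]
  change G (w, 0) + G (0, t) = G (w, 0)
  rw [le_antisymm hpos hneg, add_zero]

theorem normalCone_inter_subset_add_of_zero_mem_interior_sub {A B : Set W} (hA : Convex ℝ A)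
    (hB : Convex ℝ B) (h0A : 0 ∈ A) (h0B : 0 ∈ B) (hBb : Bornology.IsBounded B)
    (hint : (0 : W) ∈ interior (A - B)) :
    normalCone (A ∩ B) 0 ⊆ normalCone A 0 + normalCone B 0 := by
  intro γ hγ
  obtain ⟨C, hC⟩ := hBb.exists_norm_le
  obtain ⟨ρ, hρ, hball⟩ := Metric.mem_nhds_iff.1 (mem_interior_iff_mem_nhds.1 hint)
  set H : Set (W × ℝ) := {p | ∃ a ∈ A, ∃ b ∈ B, p.1 = a - b ∧ p.2 ≤ γ b}
  have hH : Convex ℝ H := by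
    rintro p ⟨a, ha, b, hb, hp₁, hp₂⟩ p' ⟨a', ha', b', hb', hp₁', hp₂'⟩ s t hs ht hst
    refine ⟨s • a + t • a', hA ha ha' hs ht hst, s • b + t • b', hB hb hb' hs ht hst, ?_, ?_⟩
    · simp only [Prod.fst_add, Prod.smul_fst, hp₁, hp₁']
      module
    · simp only [Prod.snd_add, Prod.smul_snd, smul_eq_mul, map_add, map_smul]
      nlinarith [mul_le_mul_of_nonneg_left hp₂ hs, mul_le_mul_of_nonneg_left hp₂' ht]
  have hHint : ((0 : W), -(‖γ‖ * C) - 1) ∈ interior H := by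
    refine interior_maximal (t := Metric.ball 0 ρ ×ˢ Iio (-(‖γ‖ * C))) ?_
      (Metric.isOpen_ball.prod isOpen_Iio) ⟨Metric.mem_ball_self hρ, by simp⟩
    rintro ⟨w, t⟩ ⟨hw, ht⟩
    obtain ⟨a, ha, b, hb, rfl⟩ := hball hw
    have hγb : |γ b| ≤ ‖γ‖ * C := (γ.le_opNorm b).trans
      (mul_le_mul_of_nonneg_left (hC b hb) (norm_nonneg γ))
    exact ⟨a, ha, b, hb, rfl, by linarith [neg_abs_le (γ b), mem_Iio.1 ht]⟩
  have hsnd : ContinuousLinearMap.snd ℝ W ℝ ∈ normalCone (H ∩ ({0} ×ˢ univ)) 0 := by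
    rintro ⟨w, t⟩ ⟨⟨a, ha, b, hb, hw, ht⟩, hw₀, -⟩
    obtain rfl : a = b := sub_eq_zero.1 (hw.symm.trans hw₀)
    simpa using ht.trans (by simpa using hγ a ⟨ha, hb⟩)
  obtain ⟨G₁, hG₁, G₂, hG₂, hG⟩ := normalCone_inter_subset_add_of_interior hH
    ((convex_singleton 0).prod convex_univ) ⟨_, hHint, mem_singleton _, mem_univ _⟩
    ⟨⟨0, h0A, 0, h0B, by simp, by simp⟩, mem_singleton _, mem_univ _⟩ hsnd
  set φ := G₂.comp (.inl ℝ W ℝ)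
  have hkey : ∀ a ∈ A, ∀ b ∈ B, γ b ≤ φ (a - b) := by
    intro a ha b hb
    have h₁ := hG₁ (a - b, γ b) ⟨a, ha, b, hb, rfl, le_rfl⟩
    have hsum := congrArg (fun G => G (a - b, γ b)) hG
    simp only [add_apply, ContinuousLinearMap.coe_snd', sub_zero,
      apply_eq_of_mem_normalCone_axis hG₂] at hsum h₁
    have hφ : φ (a - b) = G₂ (a - b, 0) := rfl
    linarith
  refine ⟨-φ, fun a ha => ?_, φ + γ, fun b hb => ?_, neg_add_cancel_left φ γ⟩
  · simpa using hkey a ha 0 h0B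
  · have := hkey 0 h0A b hb
    simp only [zero_sub, map_neg] at this
    simpa using by linarith

theorem normalCone_inter_subset_add_of_posSpan_sub_eq_univ [CompleteSpace W] {A B : Set W}
    (hA : Convex ℝ A) (hB : Convex ℝ B) (hAc : IsClosed A) (hBc : IsClosed B) (h0A : 0 ∈ A)
    (h0B : 0 ∈ B) (hspan : posSpan (A - B) = univ) :
    normalCone (A ∩ B) 0 ⊆ normalCone A 0 + normalCone B 0 := by
  obtain ⟨ρ, hρ, hball⟩ := exists_ball_subset_of_posSpan_sub_eq_univ hA hB hAc hBc h0A h0B hspan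
  have h0 : (0 : W) ∈ Metric.closedBall 0 1 := Metric.mem_closedBall_self zero_le_one
  calc normalCone (A ∩ B) 0
      ⊆ normalCone (A ∩ Metric.closedBall 0 1 ∩ (B ∩ Metric.closedBall 0 1)) 0 :=
        normalCone_anti (inter_subset_inter inter_subset_left inter_subset_left) 0
    _ ⊆ normalCone (A ∩ Metric.closedBall 0 1) 0 + normalCone (B ∩ Metric.closedBall 0 1) 0 :=
        normalCone_inter_subset_add_of_zero_mem_interior_sub
          (hA.inter (convex_closedBall 0 1)) (hB.inter (convex_closedBall 0 1))
          ⟨h0A, h0⟩ ⟨h0B, h0⟩ (Metric.isBounded_closedBall.subset inter_subset_right)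
          (mem_interior.2 ⟨_, hball, Metric.isOpen_ball, Metric.mem_ball_self hρ⟩)
    _ = normalCone A 0 + normalCone B 0 := by
        rw [normalCone_inter_closedBall hA h0A one_pos, normalCone_inter_closedBall hB h0B one_pos]

theorem normalCone_inter_subset_add_of_posSpan_eq [CompleteSpace W] {Ω₁ Ω₂ : Set W}
    (h₁ : Convex ℝ Ω₁) (h₂ : Convex ℝ Ω₂) (hc₁ : IsClosed Ω₁) (hc₂ : IsClosed Ω₂)
    {L : Submodule ℝ W} (hL : IsClosed (L : Set W)) (hspan : posSpan (Ω₁ - Ω₂) = L) {zb : W}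
    (hzb : zb ∈ Ω₁ ∩ Ω₂) :
    normalCone (Ω₁ ∩ Ω₂) zb ⊆ normalCone Ω₁ zb + normalCone Ω₂ zb := by
  have hsubL : Ω₁ - Ω₂ ⊆ L := fun v hv => hspan ▸ ⟨1, one_pos, v, hv, (one_smul ℝ v).symm⟩
  have hsub₁ : ∀ w ∈ Ω₁, w - zb ∈ L := fun w hw => hsubL (sub_mem_sub hw hzb.2)
  have hsub₂ : ∀ w ∈ Ω₂, w - zb ∈ L := fun w hw => by
    simpa using L.neg_mem (hsubL (sub_mem_sub hzb.1 hw))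
  have : CompleteSpace L := hL.completeSpace_coe
  set j : L → W := fun w => zb + (w : W)
  have hconv : ∀ {Ω : Set W}, Convex ℝ Ω → Convex ℝ (j ⁻¹' Ω) :=
    fun h => (h.translate_preimage_right zb).linear_preimage L.subtype
  have hclosed : ∀ {Ω : Set W}, IsClosed Ω → IsClosed (j ⁻¹' Ω) :=
    fun h => h.preimage (continuous_const.add continuous_subtype_val)
  have hspanL : posSpan (j ⁻¹' Ω₁ - j ⁻¹' Ω₂) = univ := by
    refine eq_univ_of_forall fun w => ?_
    obtain ⟨t, ht, _, ⟨z₁, hz₁, z₂, hz₂, rfl⟩, hw⟩ : (w : W) ∈ posSpan (Ω₁ - Ω₂) := hspan ▸ w.2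
    refine ⟨t, ht, _, ⟨⟨z₁ - zb, hsub₁ z₁ hz₁⟩, by simpa [j] using hz₁, ⟨z₂ - zb, hsub₂ z₂ hz₂⟩,
      by simpa [j] using hz₂, rfl⟩, Subtype.ext ?_⟩
    simp [hw]
  intro g hg
  obtain ⟨γ₁, hγ₁, γ₂, hγ₂, hγ⟩ := normalCone_inter_subset_add_of_posSpan_sub_eq_univ
    (hconv h₁) (hconv h₂) (hclosed hc₁) (hclosed hc₂) (by simpa [j] using hzb.1)
    (by simpa [j] using hzb.2) hspanL
    ((mem_normalCone_iff_comp_subtypeL fun w hw => hsub₁ w hw.1).1 hg)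
  obtain ⟨g₁, hg₁, -⟩ := exists_extension_norm_eq L γ₁
  have hg₁' : g₁.comp L.subtypeL = γ₁ := ContinuousLinearMap.ext hg₁
  refine ⟨g₁, (mem_normalCone_iff_comp_subtypeL hsub₁).2 (hg₁' ▸ hγ₁), g - g₁,
    (mem_normalCone_iff_comp_subtypeL hsub₂).2 ?_, add_sub_cancel _ _⟩
  rwa [ContinuousLinearMap.sub_comp, hg₁', ← hγ, add_sub_cancel_left]

end NormedSpace

section Transfer

variable {E Z : Type*} [AddCommGroup E] [Module ℝ E] [TopologicalSpace E]
  [AddCommGroup Z] [Module ℝ Z] [TopologicalSpace Z]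

theorem posSpan_preimage_sub_preimage (e : E ≃L[ℝ] Z) (Ω₁ Ω₂ : Set Z) :
    posSpan (e ⁻¹' Ω₁ - e ⁻¹' Ω₂) = e ⁻¹' posSpan (Ω₁ - Ω₂) := by
  ext x
  constructor
  · rintro ⟨t, ht, _, ⟨a, ha, b, hb, rfl⟩, rfl⟩
    exact ⟨t, ht, e a - e b, sub_mem_sub ha hb, by simp⟩
  · rintro ⟨t, ht, _, ⟨a, ha, b, hb, rfl⟩, hx⟩
    refine ⟨t, ht, e.symm a - e.symm b, sub_mem_sub (by simpa) (by simpa), e.injective ?_⟩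
    simp [hx]

namespace ContinuousLinearEquiv

theorem comp_mem_normalCone_preimage_iff (e : E ≃L[ℝ] Z) {Ω : Set Z} {z : E}
    {g : Z →L[ℝ] ℝ} :
    g.comp (e : E →L[ℝ] Z) ∈ normalCone (e ⁻¹' Ω) z ↔ g ∈ normalCone Ω (e z) := by
  simp only [mem_normalCone, mem_preimage, ContinuousLinearMap.coe_comp, Function.comp_apply,
    coe_coe, map_sub]
  exact (e.surjective.forall (p := fun w => w ∈ Ω → g (w - e z) ≤ 0)).symm

theorem normalCone_inter_subset_add_of_posSpan_eq {W : Type*} [NormedAddCommGroup W]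
    [NormedSpace ℝ W] [CompleteSpace W] (e : W ≃L[ℝ] Z) {Ω₁ Ω₂ : Set Z} (h₁ : Convex ℝ Ω₁)
    (h₂ : Convex ℝ Ω₂) (hc₁ : IsClosed Ω₁) (hc₂ : IsClosed Ω₂) {L : Submodule ℝ Z}
    (hL : IsClosed (L : Set Z)) (hspan : posSpan (Ω₁ - Ω₂) = L) {zb : Z} (hzb : zb ∈ Ω₁ ∩ Ω₂) :
    normalCone (Ω₁ ∩ Ω₂) zb ⊆ normalCone Ω₁ zb + normalCone Ω₂ zb := by
  intro g hg
  obtain ⟨z₀, rfl⟩ := e.surjective zb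
  obtain ⟨g₁, hg₁, g₂, hg₂, hsum⟩ := _root_.normalCone_inter_subset_add_of_posSpan_eq
    (h₁.linear_preimage (e : W →ₗ[ℝ] Z)) (h₂.linear_preimage (e : W →ₗ[ℝ] Z))
    (hc₁.preimage e.continuous) (hc₂.preimage e.continuous) (L := L.comap (e : W →ₗ[ℝ] Z))
    (hL.preimage e.continuous)
    ((posSpan_preimage_sub_preimage e Ω₁ Ω₂).trans (congrArg (e ⁻¹' ·) hspan)) hzb
    (e.comp_mem_normalCone_preimage_iff.2 hg)
  have hback : ∀ h : W →L[ℝ] ℝ, (h.comp (e.symm : Z →L[ℝ] W)).comp (e : W →L[ℝ] Z) = h :=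
    fun h => by rw [ContinuousLinearMap.comp_assoc, coe_symm_comp_coe, ContinuousLinearMap.comp_id]
  refine ⟨g₁.comp (e.symm : Z →L[ℝ] W),
    e.comp_mem_normalCone_preimage_iff.1 ((hback g₁).symm ▸ hg₁),
    g₂.comp (e.symm : Z →L[ℝ] W),
    e.comp_mem_normalCone_preimage_iff.1 ((hback g₂).symm ▸ hg₂), ?_⟩
  change g₁.comp _ + g₂.comp _ = g
  rw [← ContinuousLinearMap.add_comp, show g₁ + g₂ = g.comp (e : W →L[ℝ] Z) from hsum,
    ContinuousLinearMap.comp_assoc, coe_comp_coe_symm, ContinuousLinearMap.comp_id]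

end ContinuousLinearEquiv

end Transfer

/-- A copy of `Z` without its topology, so that the norm given by `IsBanach Z` can be installed
on it without clashing with the topology of `Z`. -/
def NormedCopy (Z : Type*) : Type _ := Z

instance {Z : Type*} [AddCommGroup Z] : AddCommGroup (NormedCopy Z) := ‹AddCommGroup Z›

instance {Z : Type*} [AddCommGroup Z] [Module ℝ Z] : Module ℝ (NormedCopy Z) := ‹Module ℝ Z›

theorem IsBanach.exists_continuousLinearEquiv {Z : Type u} [AddCommGroup Z] [Module ℝ Z]
    [TopologicalSpace Z] (h : IsBanach Z) :
    ∃ (W : Type u) (_ : NormedAddCommGroup W) (_ : NormedSpace ℝ W) (_ : CompleteSpace W),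
      Nonempty (W ≃L[ℝ] Z) := by
  obtain ⟨nm, h0, hadd, hsmul, hopen, hcompl⟩ := h
  let gn : AddGroupNorm Z :=
    { toFun := nm
      map_zero' := (h0 0).2 rfl
      add_le' := hadd
      neg' := fun x => by rw [← neg_one_smul ℝ x, hsmul, abs_neg, abs_one, one_mul]
      eq_zero_of_map_eq_zero' := fun x => (h0 x).1 }
  let : NormedAddCommGroup (NormedCopy Z) :=
    AddGroupNorm.toNormedAddCommGroup (E := NormedCopy Z) gn
  let : NormedSpace ℝ (NormedCopy Z) := { norm_smul_le := fun c x => (hsmul c x).le }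
  have hopen' : ∀ s : Set (NormedCopy Z), IsOpen s ↔ IsOpen (X := Z) s := fun s => by
    rw [Metric.isOpen_iff, hopen s]
    simp only [subset_def, mem_ball_iff_norm]
    rfl
  let e : NormedCopy Z ≃L[ℝ] Z :=
    { LinearEquiv.refl ℝ Z with
      continuous_toFun := continuous_def.2 fun s hs => (hopen' s).2 hs
      continuous_invFun := continuous_def.2 fun s hs => (hopen' s).1 hs }
  refine ⟨NormedCopy Z, inferInstance, inferInstance,
    Metric.complete_of_cauchySeq_tendsto fun u hu => ?_, ⟨e⟩⟩
  obtain ⟨x, hx⟩ := hcompl u fun ε hε => by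
    have := Metric.cauchySeq_iff.1 hu ε hε
    simp only [dist_eq_norm] at this
    exact this
  exact ⟨e.symm x, (e.symm.continuous.tendsto x).comp hx⟩

theorem coderivative_intersection_rule_general
    {X Y : Type*} [AddCommGroup X] [Module ℝ X] [TopologicalSpace X]
    [IsTopologicalAddGroup X] [ContinuousSMul ℝ X]
    [AddCommGroup Y] [Module ℝ Y] [TopologicalSpace Y]
    [IsTopologicalAddGroup Y] [ContinuousSMul ℝ Y]
    (F₁ F₂ : X → Set Y)
    (hF₁ : Convex ℝ (gphF F₁)) (hF₂ : Convex ℝ (gphF F₂))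
    (hcase :
      (interior (gphF F₁) ∩ gphF F₂).Nonempty ∨
      (IsBanach X ∧ IsBanach Y ∧ IsClosed (gphF F₁) ∧ IsClosed (gphF F₂) ∧
        ∃ L : Submodule ℝ (X × Y), IsClosed (L : Set (X × Y)) ∧
          posSpan (gphF F₁ - gphF F₂) = (L : Set (X × Y)))) :
    ∀ (xb : X) (yb : Y), yb ∈ F₁ xb ∩ F₂ xb →
      ∀ q : Y →L[ℝ] ℝ,
        coderivF (fun x => F₁ x ∩ F₂ x) xb yb q
          = ⋃ (q₁ : Y →L[ℝ] ℝ) (q₂ : Y →L[ℝ] ℝ) (_ : q₁ + q₂ = q),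
              coderivF F₁ xb yb q₁ + coderivF F₂ xb yb q₂ := by
  intro xb yb hyb q
  refine coderivF_inter_eq_of_normalCone_inter_subset ?_ q
  rcases hcase with hint | ⟨hX, hY, hc₁, hc₂, L, hL, hspan⟩
  · exact normalCone_inter_subset_add_of_interior hF₁ hF₂ hint hyb
  · obtain ⟨V₁, _, _, _, ⟨e₁⟩⟩ := hX.exists_continuousLinearEquiv
    obtain ⟨V₂, _, _, _, ⟨e₂⟩⟩ := hY.exists_continuousLinearEquiv
    exact (e₁.prodCongr e₂).normalCone_inter_subset_add_of_posSpan_eq hF₁ hF₂ hc₁ hc₂ hL hspan hyb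

/-- the coderivative intersection rule
`D*(F₁ ∩ F₂)(x̄,ȳ)(y*) = ⋃_{y₁* + y₂* = y*} (D*F₁(x̄,ȳ)(y₁*) + D*F₂(x̄,ȳ)(y₂*))`,
under either (i) `int(gph F₁) ∩ gph F₂ ≠ ∅`, or (ii) `X, Y` Banach, closed graphs and
`ℝ⁺(gph F₁ - gph F₂)` a closed linear subspace of `X × Y`. -/
theorem coderivative_intersection_rule
    {X Y : Type*} [AddCommGroup X] [Module ℝ X] [TopologicalSpace X]
    [IsTopologicalAddGroup X] [ContinuousSMul ℝ X] [LocallyConvexSpace ℝ X] [T2Space X]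
    [AddCommGroup Y] [Module ℝ Y] [TopologicalSpace Y]
    [IsTopologicalAddGroup Y] [ContinuousSMul ℝ Y] [LocallyConvexSpace ℝ Y] [T2Space Y]
    (F₁ F₂ : X → Set Y)
    (hF₁ : Convex ℝ (gphF F₁)) (hF₂ : Convex ℝ (gphF F₂))
    (hcase :
      (interior (gphF F₁) ∩ gphF F₂).Nonempty ∨
      (IsBanach X ∧ IsBanach Y ∧ IsClosed (gphF F₁) ∧ IsClosed (gphF F₂) ∧
        ∃ L : Submodule ℝ (X × Y), IsClosed (L : Set (X × Y)) ∧
          posSpan (gphF F₁ - gphF F₂) = (L : Set (X × Y)))) :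
    ∀ (xb : X) (yb : Y), yb ∈ F₁ xb ∩ F₂ xb →
      ∀ q : Y →L[ℝ] ℝ,
        coderivF (fun x => F₁ x ∩ F₂ x) xb yb q
          = ⋃ (q₁ : Y →L[ℝ] ℝ) (q₂ : Y →L[ℝ] ℝ) (_ : q₁ + q₂ = q),
              coderivF F₁ xb yb q₁ + coderivF F₂ xb yb q₂ :=
  coderivative_intersection_rule_general F₁ F₂ hF₁ hF₂ hcase
end
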